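/- arXiv:1107.2243 — 9 statements merged into one kernel-verified Lean document; each statement's English description precedes it below -/
import Mathlib

section
/- (Lemma 1.1.) Let U ⊆ ℝⁿ be open, ρ : U → ℝⁿ a covector field and H : U → Matrix (Fin n) (Fin n) ℝ a C^∞ matrix field. Then for every x ∈ U and all u, v ∈ ℝⁿ: d(ρ∘H)(x)(H(x)u, v) + d(ρ∘H)(x)(u, H(x)v) = dρ(x)(H(x)u, H(x)v) + d(ρ∘H²)(x)(u, v) + ⟨ρ(x), N_H(x)(u,v)⟩, where ρ∘H² denotes the covector field x ↦ (H(x)²)ᵀ·ρ(x). -/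
/-! The Leibniz rule gives `d(ρ∘G)(u,v) = ⟨ρ, DG(u)v − DG(v)u⟩ + ⟨Dρ(u), Gv⟩ − ⟨Dρ(v), Gu⟩`
for any matrix field `G`. Applying it to `G = H` and `G = H²`, with `D(H²) = DH·H + H·DH`,
the `Dρ`-terms of the two sides match pairwise and the remaining `ρ`-terms are exactly
`⟨ρ, N_H(u,v)⟩`; what is left is linear algebra. -/

open Matrix

/-- Directional derivative of a matrix field, entrywise. -/
noncomputable def matDirDeriv {d n : ℕ} (G : (Fin d → ℝ) → Matrix (Fin n) (Fin n) ℝ)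
    (x w : Fin d → ℝ) : Matrix (Fin n) (Fin n) ℝ :=
  Matrix.of fun i j => fderiv ℝ (fun y => G y i j) x w

/-- The Nijenhuis torsion of a matrix field `G` on an open subset of `ℝⁿ`:
`N_G(x)(u,v) = (DG(x)(G(x)u))·v − (DG(x)(G(x)v))·u + G(x)·((DG(x)v)·u) − G(x)·((DG(x)u)·v)`. -/
noncomputable def nijenhuis {n : ℕ} (G : (Fin n → ℝ) → Matrix (Fin n) (Fin n) ℝ)
    (x u v : Fin n → ℝ) : Fin n → ℝ :=
  (matDirDeriv G x ((G x).mulVec u)).mulVec v - (matDirDeriv G x ((G x).mulVec v)).mulVec u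
    + (G x).mulVec ((matDirDeriv G x v).mulVec u) - (G x).mulVec ((matDirDeriv G x u).mulVec v)

/-- Exterior derivative of a covector field: `dρ(x)(u,v) = ⟨Dρ(x)u, v⟩ − ⟨Dρ(x)v, u⟩`. -/
noncomputable def covExtDeriv {n : ℕ} (ρ : (Fin n → ℝ) → (Fin n → ℝ))
    (x u v : Fin n → ℝ) : ℝ :=
  (fderiv ℝ ρ x u) ⬝ᵥ v - (fderiv ℝ ρ x v) ⬝ᵥ u

lemma fderiv_apply_apply {d n : ℕ} {Φ : (Fin d → ℝ) → Fin n → ℝ} {x : Fin d → ℝ}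
    (hΦ : DifferentiableAt ℝ Φ x) (w : Fin d → ℝ) (i : Fin n) :
    fderiv ℝ Φ x w i = fderiv ℝ (fun y => Φ y i) x w := by
  rw [fderiv_apply hΦ]
  rfl

section MatrixField

variable {d n : ℕ} {A B : (Fin d → ℝ) → Matrix (Fin n) (Fin n) ℝ} {x : Fin d → ℝ}

lemma differentiableAt_mul_apply (hA : ∀ i j, DifferentiableAt ℝ (fun y => A y i j) x)
    (hB : ∀ i j, DifferentiableAt ℝ (fun y => B y i j) x) (i j : Fin n) :
    DifferentiableAt ℝ (fun y => (A y * B y) i j) x := by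
  simp only [mul_apply]
  exact DifferentiableAt.fun_sum fun k _ => (hA i k).mul (hB k j)

lemma matDirDeriv_mul (hA : ∀ i j, DifferentiableAt ℝ (fun y => A y i j) x)
    (hB : ∀ i j, DifferentiableAt ℝ (fun y => B y i j) x) (w : Fin d → ℝ) :
    matDirDeriv (fun y => A y * B y) x w
      = matDirDeriv A x w * B x + A x * matDirDeriv B x w := by
  ext i j
  simp only [matDirDeriv, of_apply, Matrix.add_apply, mul_apply]
  rw [fderiv_fun_sum (A := fun k y => A y i k * B y k j) fun k _ => (hA i k).mul (hB k j),
    _root_.sum_apply, ← Finset.sum_add_distrib]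
  refine Finset.sum_congr rfl fun k _ => ?_
  rw [fderiv_fun_mul (hA i k) (hB k j)]
  simp only [_root_.add_apply, _root_.smul_apply, smul_eq_mul]
  ring

lemma fderiv_transpose_mulVec {ρ : (Fin d → ℝ) → Fin n → ℝ}
    (hA : ∀ i j, DifferentiableAt ℝ (fun y => A y i j) x) (hρ : DifferentiableAt ℝ ρ x)
    (w : Fin d → ℝ) :
    fderiv ℝ (fun y => (A y)ᵀ *ᵥ ρ y) x w
      = (matDirDeriv A x w)ᵀ *ᵥ ρ x + (A x)ᵀ *ᵥ fderiv ℝ ρ x w := by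
  have hρ' : ∀ j, DifferentiableAt ℝ (fun y => ρ y j) x := differentiableAt_pi.1 hρ
  have hcoord : ∀ i, DifferentiableAt ℝ (fun y => ((A y)ᵀ *ᵥ ρ y) i) x := fun i => by
    simp only [mulVec, dotProduct, transpose_apply]
    exact DifferentiableAt.fun_sum fun j _ => (hA j i).mul (hρ' j)
  ext i
  rw [fderiv_apply_apply (differentiableAt_pi.2 hcoord)]
  simp only [mulVec, dotProduct, transpose_apply, Pi.add_apply]
  rw [fderiv_fun_sum (A := fun j y => A y j i * ρ y j) fun j _ => (hA j i).mul (hρ' j),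
    _root_.sum_apply, ← Finset.sum_add_distrib]
  refine Finset.sum_congr rfl fun j _ => ?_
  rw [fderiv_fun_mul (hA j i) (hρ' j), fderiv_apply_apply hρ]
  simp only [_root_.add_apply, _root_.smul_apply, smul_eq_mul, matDirDeriv, of_apply]
  ring

end MatrixField

lemma covExtDeriv_transpose_mulVec {n : ℕ} {G : (Fin n → ℝ) → Matrix (Fin n) (Fin n) ℝ}
    {ρ : (Fin n → ℝ) → Fin n → ℝ} {x : Fin n → ℝ}
    (hG : ∀ i j, DifferentiableAt ℝ (fun y => G y i j) x) (hρ : DifferentiableAt ℝ ρ x)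
    (u v : Fin n → ℝ) :
    covExtDeriv (fun y => (G y)ᵀ *ᵥ ρ y) x u v
      = ρ x ⬝ᵥ (matDirDeriv G x u *ᵥ v - matDirDeriv G x v *ᵥ u)
        + fderiv ℝ ρ x u ⬝ᵥ G x *ᵥ v - fderiv ℝ ρ x v ⬝ᵥ G x *ᵥ u := by
  rw [covExtDeriv, fderiv_transpose_mulVec hG hρ, fderiv_transpose_mulVec hG hρ]
  simp only [add_dotProduct, mulVec_transpose, dotProduct_sub, dotProduct_mulVec]
  ring

/-- Lemma 1.1: for a 1-form `ρ` and a (1,1)-tensor field `H`,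
`d(ρ∘H)(Hu,v) + d(ρ∘H)(u,Hv) = dρ(Hu,Hv) + d(ρ∘H²)(u,v) + ρ(N_H(u,v))`. -/
theorem lemma_1_1 {n : ℕ} (U : Set (Fin n → ℝ)) (hU : IsOpen U)
    (ρ : (Fin n → ℝ) → (Fin n → ℝ)) (H : (Fin n → ℝ) → Matrix (Fin n) (Fin n) ℝ)
    (hρ : ContDiffOn ℝ (⊤ : ℕ∞) ρ U)
    (hH : ∀ i j, ContDiffOn ℝ (⊤ : ℕ∞) (fun y => H y i j) U) :
    ∀ x ∈ U, ∀ u v : Fin n → ℝ,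
      covExtDeriv (fun y => (H y)ᵀ.mulVec (ρ y)) x ((H x).mulVec u) v
        + covExtDeriv (fun y => (H y)ᵀ.mulVec (ρ y)) x u ((H x).mulVec v)
      = covExtDeriv ρ x ((H x).mulVec u) ((H x).mulVec v)
        + covExtDeriv (fun y => ((H y * H y)ᵀ).mulVec (ρ y)) x u v
        + ρ x ⬝ᵥ nijenhuis H x u v := by
  intro x hx u v
  have hρx : DifferentiableAt ℝ ρ x :=
    (hρ.differentiableOn (by simp)).differentiableAt (hU.mem_nhds hx)
  have hHx : ∀ i j, DifferentiableAt ℝ (fun y => H y i j) x := fun i j =>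
    ((hH i j).differentiableOn (by simp)).differentiableAt (hU.mem_nhds hx)
  rw [covExtDeriv_transpose_mulVec hHx hρx, covExtDeriv_transpose_mulVec hHx hρx,
    covExtDeriv_transpose_mulVec (differentiableAt_mul_apply hHx hHx) hρx,
    matDirDeriv_mul hHx hHx, matDirDeriv_mul hHx hHx]
  simp only [covExtDeriv, nijenhuis, add_mulVec, ← mulVec_mulVec, dotProduct_add,
    dotProduct_sub]
  ring
end

section
/- (Lemma 1.7, existence, uniqueness and symmetry.) Let 𝕂 be ℝ or ℂ, V a 𝕂-vector space of finite dimension 2n, α a nondegenerate alternating bilinear form on V, r ≥ 1, and β an alternating (r+1)-linear form on V. Then there exists a unique alternating r-multilinear map h : Vʳ → V such that β(v₁,…,v_{r+1}) = α(h(v₁,…,v_r), v_{r+1}) for all v₁,…,v_{r+1} ∈ V; moreover this h satisfies α(h(v₁,…,v_r), v_{r+1}) = α(v_r, h(v₁,…,v_{r−1}, v_{r+1})) for all v₁,…,v_{r+1} ∈ V. -/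
/-! Raising the last index of `β` with the nondegenerate form `α` produces `h`: by nondegeneracy
the functional `w ↦ β(v₁, …, v_r, w)` is `α(h(v₁, …, v_r), ·)` for a unique vector, and this vector
depends alternatingly on the `vᵢ`. The symmetry is the antisymmetry of `β` in its last two
arguments combined with the skew-symmetry of `α`. -/

namespace AlternatingMap

variable {R M N : Type*} [CommRing R] [AddCommGroup M] [Module R M] [AddCommGroup N] [Module R N]
  {n : ℕ}

def curryRight (f : M [⋀^Fin (n + 1)]→ₗ[R] N) : M [⋀^Fin n]→ₗ[R] (M →ₗ[R] N) where
  toMultilinearMap := f.toMultilinearMap.curryRight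
  map_eq_zero_of_eq' v i j hij hne := by
    ext w
    exact f.map_eq_zero_of_eq (Fin.snoc v w) (i := i.castSucc) (j := j.castSucc)
      (by simpa [Fin.snoc_castSucc]) (by simpa)

@[simp]
theorem curryRight_apply (f : M [⋀^Fin (n + 1)]→ₗ[R] N) (v : Fin n → M) (w : M) :
    f.curryRight v w = f (Fin.snoc v w) := by
  simp [curryRight, MultilinearMap.curryRight_apply]

theorem map_snoc_snoc_swap (f : M [⋀^Fin (n + 2)]→ₗ[R] N) (v : Fin n → M) (a b : M) :
    f (Fin.snoc (Fin.snoc v a) b) = -f (Fin.snoc (Fin.snoc v b) a) := by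
  have hAlt : (f.curryRight.curryRight v).IsAlt := fun a ↦ by
    simpa using f.map_eq_zero_of_eq (Fin.snoc (Fin.snoc v a) a)
      (i := (Fin.last n).castSucc) (j := Fin.last (n + 1)) (by simp)
      (Fin.castSucc_lt_last _).ne
  simpa using (hAlt.neg b a).symm

end AlternatingMap

namespace LinearMap

open AlternatingMap

section CommRing

variable {R V : Type*} [CommRing R] [AddCommGroup V] [Module R V]
  {α : V →ₗ[R] V →ₗ[R] R} {r : ℕ}

theorem forall_eq_apply_init_last_iff {β : V [⋀^Fin (r + 1)]→ₗ[R] R} {h : V [⋀^Fin r]→ₗ[R] V} :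
    (∀ v : Fin (r + 1) → V, β v = α (h fun i ↦ v i.castSucc) (v (Fin.last r))) ↔
      ∀ x w, α (h x) w = β (Fin.snoc x w) := by
  refine ⟨fun H x w ↦ by simpa using (H (Fin.snoc x w)).symm, fun H v ↦ ?_⟩
  rw [H, ← Fin.init_def, Fin.snoc_init_self]

theorem SeparatingLeft.alternatingMap_ext (hα : α.SeparatingLeft) {β : V [⋀^Fin (r + 1)]→ₗ[R] R}
    {h h' : V [⋀^Fin r]→ₗ[R] V}
    (H : ∀ x w, α (h x) w = β (Fin.snoc x w)) (H' : ∀ x w, α (h' x) w = β (Fin.snoc x w)) :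
    h = h' := by
  have hinj : Function.Injective α :=
    LinearMap.ker_eq_bot.mp (LinearMap.separatingLeft_iff_ker_eq_bot.mp hα)
  ext x
  exact hinj (LinearMap.ext fun w ↦ (H x w).trans (H' x w).symm)

theorem IsAlt.apply_snoc_comm {β : V [⋀^Fin (r + 2)]→ₗ[R] R} {h : V [⋀^Fin (r + 1)]→ₗ[R] V}
    (halt : α.IsAlt) (H : ∀ x w, α (h x) w = β (Fin.snoc x w)) (v : Fin r → V) (a b : V) :
    α (h (Fin.snoc v a)) b = α a (h (Fin.snoc v b)) := by
  rw [H, map_snoc_snoc_swap, ← H, halt.neg]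

end CommRing

section Field

variable {K V : Type*} [Field K] [AddCommGroup V] [Module K V] [FiniteDimensional K V]
  (α : V →ₗ[K] V →ₗ[K] K) (hα : α.Nondegenerate) {r : ℕ}

noncomputable def raiseLast (β : V [⋀^Fin (r + 1)]→ₗ[K] K) : V [⋀^Fin r]→ₗ[K] V :=
  ((BilinForm.toDual α hα).symm : Module.Dual K V →ₗ[K] V).compAlternatingMap β.curryRight

@[simp]
theorem apply_raiseLast_apply (β : V [⋀^Fin (r + 1)]→ₗ[K] K) (x : Fin r → V) (w : V) :
    α (raiseLast α hα β x) w = β (Fin.snoc x w) := by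
  simp [raiseLast]

end Field

end LinearMap

open LinearMap in
theorem lemma_1_7_general {𝕂 : Type*} [RCLike 𝕂] {V : Type*} [AddCommGroup V] [Module 𝕂 V]
    [FiniteDimensional 𝕂 V]
    (α : V →ₗ[𝕂] V →ₗ[𝕂] 𝕂) (halt : ∀ v, α v v = 0)
    (hnd : ∀ u, (∀ v, α u v = 0) → u = 0)
    (r : ℕ) (β : AlternatingMap 𝕂 V 𝕂 (Fin (r + 2))) :
    (∃! h : AlternatingMap 𝕂 V V (Fin (r + 1)),
        ∀ v : Fin (r + 2) → V,
          β v = α (h fun i => v i.castSucc) (v (Fin.last (r + 1)))) ∧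
      ∀ h : AlternatingMap 𝕂 V V (Fin (r + 1)),
        (∀ v : Fin (r + 2) → V,
            β v = α (h fun i => v i.castSucc) (v (Fin.last (r + 1)))) →
          ∀ (v : Fin r → V) (a b : V),
            α (h (Fin.snoc v a)) b = α a (h (Fin.snoc v b)) := by
  have hα : α.Nondegenerate := (IsAlt.isRefl halt).nondegenerate_iff_separatingLeft.mpr hnd
  simp only [forall_eq_apply_init_last_iff]
  exact ⟨⟨raiseLast α hα β, apply_raiseLast_apply α hα β, fun h H ↦
      SeparatingLeft.alternatingMap_ext hnd H (apply_raiseLast_apply α hα β)⟩,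
    fun h H ↦ IsAlt.apply_snoc_comm halt H⟩

/-- Lemma 1.7 (existence, uniqueness and symmetry): on a `2n`-dimensional vector space `V`
over `𝕂 = ℝ` or `ℂ`, with `α` a nondegenerate alternating bilinear form and `β` an
alternating `(r+1)`-linear form (here written with `r+1 ≥ 1` arguments for `h`), there is a
unique alternating multilinear map `h : V^(r+1) → V` with
`β(v₁,…,v_{r+2}) = α(h(v₁,…,v_{r+1}), v_{r+2})`; moreover any such `h` satisfies
`α(h(v,a), b) = α(a, h(v,b))`. -/
theorem lemma_1_7 {𝕂 : Type*} [RCLike 𝕂] {V : Type*} [AddCommGroup V] [Module 𝕂 V]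
    [FiniteDimensional 𝕂 V] {n : ℕ} (hdim : Module.finrank 𝕂 V = 2 * n)
    (α : V →ₗ[𝕂] V →ₗ[𝕂] 𝕂) (halt : ∀ v, α v v = 0)
    (hnd : ∀ u, (∀ v, α u v = 0) → u = 0)
    (r : ℕ) (β : AlternatingMap 𝕂 V 𝕂 (Fin (r + 2))) :
    (∃! h : AlternatingMap 𝕂 V V (Fin (r + 1)),
        ∀ v : Fin (r + 2) → V,
          β v = α (h fun i => v i.castSucc) (v (Fin.last (r + 1)))) ∧
      ∀ h : AlternatingMap 𝕂 V V (Fin (r + 1)),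
        (∀ v : Fin (r + 2) → V,
            β v = α (h fun i => v i.castSucc) (v (Fin.last (r + 1)))) →
          ∀ (v : Fin r → V) (a b : V),
            α (h (Fin.snoc v a)) b = α a (h (Fin.snoc v b)) :=
  lemma_1_7_general α halt hnd r β
end

section
/- (Lemma 1.7, converse.) Let 𝕂 be ℝ or ℂ, V a finite-dimensional 𝕂-vector space, α an alternating bilinear form on V, r ≥ 1, and h : Vʳ → V an alternating r-multilinear map satisfying α(h(v₁,…,v_r), v_{r+1}) = α(v_r, h(v₁,…,v_{r−1}, v_{r+1})) for all v₁,…,v_{r+1} ∈ V. Then the multilinear map (v₁,…,v_{r+1}) ↦ α(h(v₁,…,v_r), v_{r+1}) is alternating; that is, there exists an alternating (r+1)-linear form β on V with β(v₁,…,v_{r+1}) = α(h(v₁,…,v_r), v_{r+1}) for all v₁,…,v_{r+1} ∈ V. -/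
/-- Lemma 1.7 (converse): if `α` is an alternating bilinear form on a finite-dimensional
vector space `V` over `𝕂 = ℝ` or `ℂ` and `h : V^(r+1) → V` is an alternating multilinear map
satisfying `α(h(v,a), b) = α(a, h(v,b))`, then `(v₁,…,v_{r+2}) ↦ α(h(v₁,…,v_{r+1}), v_{r+2})`
is an alternating `(r+2)`-linear form. -/
theorem lemma_1_7_converse {𝕂 : Type*} [RCLike 𝕂] {V : Type*} [AddCommGroup V] [Module 𝕂 V]
    [FiniteDimensional 𝕂 V]
    (α : V →ₗ[𝕂] V →ₗ[𝕂] 𝕂) (halt : ∀ v, α v v = 0)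
    (r : ℕ) (h : AlternatingMap 𝕂 V V (Fin (r + 1)))
    (hsym : ∀ (v : Fin r → V) (a b : V),
      α (h (Fin.snoc v a)) b = α a (h (Fin.snoc v b))) :
    ∃ β : AlternatingMap 𝕂 V 𝕂 (Fin (r + 2)),
      ∀ v : Fin (r + 2) → V,
        β v = α (h fun i => v i.castSucc) (v (Fin.last (r + 1))) := by
  -- skew-symmetry of α
  have hskew : ∀ x y : V, α x y = - α y x := by
    intro x y
    have H := halt (x + y)
    simp only [map_add, LinearMap.add_apply, halt, zero_add, add_zero] at H
    linear_combination H
  -- key: α (h w) (w k) = 0 for any k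
  have key : ∀ (w : Fin (r + 1) → V) (k : Fin (r + 1)), α (h w) (w k) = 0 := by
    have last_case : ∀ w : Fin (r + 1) → V, α (h w) (w (Fin.last r)) = 0 := by
      intro w
      have hw : w = Fin.snoc (Fin.init w) (w (Fin.last r)) := (Fin.snoc_init_self w).symm
      have h1 : α (h w) (w (Fin.last r)) = α (w (Fin.last r)) (h w) := by
        conv_lhs => rw [hw]
        rw [hsym, Fin.snoc_last]
        exact congrArg (α (w (Fin.last r))) (congrArg h hw.symm)
      have h2 : α (h w) (w (Fin.last r)) = - α (h w) (w (Fin.last r)) := by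
        conv_lhs => rw [h1]
        exact hskew _ _
      have h3 : (2 : 𝕂) * α (h w) (w (Fin.last r)) = 0 := by linear_combination h2
      have := mul_eq_zero.mp h3
      rcases this with h4 | h4
      · exact absurd h4 two_ne_zero
      · exact h4
    intro w k
    by_cases hk : k = Fin.last r
    · rw [hk]; exact last_case w
    · have hswap := h.map_swap w hk
      have := last_case (w ∘ Equiv.swap k (Fin.last r))
      have hlast : (w ∘ Equiv.swap k (Fin.last r)) (Fin.last r) = w k := by
        simp [Equiv.swap_apply_right]
      rw [hlast, hswap] at this
      simpa using this
  refine ⟨{ toMultilinearMap := (α.compMultilinearMap h.toMultilinearMap).uncurryRight,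
            map_eq_zero_of_eq' := ?_ }, ?_⟩
  · intro v i j hij hne
    simp only [MultilinearMap.toFun_eq_coe]
    have happ : (α.compMultilinearMap h.toMultilinearMap).uncurryRight v
        = α (h (Fin.init v)) (v (Fin.last (r + 1))) := rfl
    rw [happ]
    by_cases hi : i = Fin.last (r + 1)
    · -- then j ≠ last, j = castSucc j'
      have hj : j ≠ Fin.last (r + 1) := fun hc => hne (hi.trans hc.symm)
      obtain ⟨j', rfl⟩ := Fin.exists_castSucc_eq.mpr hj
      have : Fin.init v j' = v (Fin.last (r + 1)) := by
        simp [Fin.init, ← hi, ← hij]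
      rw [← this]
      exact key (Fin.init v) j'
    · by_cases hj : j = Fin.last (r + 1)
      · obtain ⟨i', rfl⟩ := Fin.exists_castSucc_eq.mpr hi
        have : Fin.init v i' = v (Fin.last (r + 1)) := by
          simp [Fin.init, ← hj, hij]
        rw [← this]
        exact key (Fin.init v) i'
      · obtain ⟨i', rfl⟩ := Fin.exists_castSucc_eq.mpr hi
        obtain ⟨j', rfl⟩ := Fin.exists_castSucc_eq.mpr hj
        have hne' : i' ≠ j' := fun hc => hne (by rw [hc])
        have heq : Fin.init v i' = Fin.init v j' := by simpa [Fin.init] using hij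
        have := h.map_eq_zero_of_eq (Fin.init v) heq hne'
        rw [this]
        simp
  · intro v
    rfl
end

section
/- (Lemma 3.1, matrix-family form.) Let U ⊆ ℝ^d be open and A : U → Matrix (Fin m) (Fin m) ℂ a C^∞ map. Say that A has constant algebraic type near p ∈ U if there exist an open neighborhood V ⊆ U of p, an s ∈ ℕ, C^∞ functions λ₁,…,λ_s : V → ℂ with λ_i(x) ≠ λ_j(x) for all i ≠ j and all x ∈ V, and natural numbers b₁,…,b_s and d_{k,j} (1 ≤ k ≤ s, 1 ≤ j ≤ m) such that for every x ∈ V the characteristic polynomial of A(x) equals ∏_{k=1}^{s} (X − λ_k(x))^{b_k} and rank((A(x) − λ_k(x)·1)^j) = d_{k,j} for all k and j. Then the set B_A of points near which A has constant algebraic type is open and dense in U. -/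
open Matrix Polynomial

/-- `A` has constant algebraic type near `p`: on some open neighborhood `V ⊆ U` of `p` there
are smooth, pairwise distinct eigenvalue functions `λ₁,…,λ_s` and constants `b_k`, `d_{k,j}`
such that the characteristic polynomial of `A(x)` is `∏ (X − λ_k(x))^{b_k}` and
`rank((A(x) − λ_k(x)·1)^j) = d_{k,j}` throughout `V`. -/
def HasConstAlgType {d m : ℕ} (A : (Fin d → ℝ) → Matrix (Fin m) (Fin m) ℂ)
    (U : Set (Fin d → ℝ)) (p : Fin d → ℝ) : Prop :=
  ∃ V : Set (Fin d → ℝ), IsOpen V ∧ p ∈ V ∧ V ⊆ U ∧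
    ∃ (s : ℕ) (lam : Fin s → (Fin d → ℝ) → ℂ) (b : Fin s → ℕ) (dd : Fin s → Fin m → ℕ),
      (∀ k, ContDiffOn ℝ (⊤ : ℕ∞) (lam k) V) ∧
      (∀ x ∈ V, ∀ k k' : Fin s, k ≠ k' → lam k x ≠ lam k' x) ∧
      (∀ x ∈ V, (A x).charpoly = ∏ k, (X - C (lam k x)) ^ (b k)) ∧
      (∀ x ∈ V, ∀ (k : Fin s) (j : Fin m),
        ((A x - lam k x • (1 : Matrix (Fin m) (Fin m) ℂ)) ^ ((j : ℕ) + 1)).rank = dd k j)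

/-!
The set is open by definition; the content is density. Let `p_j(x) = tr (A x ^ j)` be the power
sums of the eigenvalues, smooth in `x`. The Hankel matrix `(p_{i+j})_{i,j<N}` factors as
`Vᵀ D V` with `V` a Vandermonde matrix in the distinct eigenvalues and `D` the diagonal of their
multiplicities, so it is invertible when `N` is the number of distinct eigenvalues and singular
when `N` is larger. Hence that number is lower semicontinuous and is locally constant near a point
`x₀` of any open set where it is maximal. Near `x₀` the Hankel system, solved by Cramer's rule,
gives the coefficients of `∏ (X - λ)` over the distinct eigenvalues as smooth functions; its roots
are simple, so the implicit function theorem makes the eigenvalues smooth and pairwise distinct.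
Finally the ranks of `(A - λₖ)^j` are lower semicontinuous, hence all locally constant near a point
maximizing their sum, and then so are the multiplicities `m - rank (A - λₖ)^m`.
-/

open Filter Topology
open scoped ContDiff

namespace Multiset

section Enumeration

variable {α : Type*} [DecidableEq α] (s : Multiset α)

noncomputable def enumDistinct (i : Fin s.toFinset.card) : α := s.toFinset.equivFin.symm i

theorem enumDistinct_injective : Function.Injective s.enumDistinct :=
  Subtype.val_injective.comp s.toFinset.equivFin.symm.injective

theorem enumDistinct_mem (i : Fin s.toFinset.card) : s.enumDistinct i ∈ s :=
  mem_toFinset.mp (s.toFinset.equivFin.symm i).2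

end Enumeration

section PowerSum

variable {R : Type*} [CommSemiring R] (s : Multiset R)

def powerSum (j : ℕ) : R := (s.map (· ^ j)).sum

def powerSumHankel (N : ℕ) : Matrix (Fin N) (Fin N) R :=
  of fun i j => s.powerSum (i + j)

theorem powerSum_eq_sum_count [DecidableEq R] (j : ℕ) :
    s.powerSum j = ∑ a ∈ s.toFinset, (s.count a : R) * a ^ j := by
  simp [powerSum, Finset.sum_multiset_map_count, nsmul_eq_mul]

theorem powerSum_eq_sum_enumDistinct [DecidableEq R] (j : ℕ) :
    s.powerSum j = ∑ i, (s.count (s.enumDistinct i) : R) * s.enumDistinct i ^ j := by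
  rw [powerSum_eq_sum_count, ← Finset.sum_coe_sort, ← Equiv.sum_comp s.toFinset.equivFin.symm]
  rfl

end PowerSum

variable {K : Type*} [Field K] [DecidableEq K] (s : Multiset K)

noncomputable def distinctRootsPoly : K[X] := ∏ a ∈ s.toFinset, (X - C a)

theorem powerSumHankel_eq_mul (N : ℕ) :
    s.powerSumHankel N =
      (of fun i (j : Fin N) => s.enumDistinct i ^ (j : ℕ))ᵀ *
        diagonal (fun i => (s.count (s.enumDistinct i) : K)) *
          of fun i (j : Fin N) => s.enumDistinct i ^ (j : ℕ) := by
  ext i j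
  simp only [powerSumHankel, powerSum_eq_sum_enumDistinct, mul_apply, of_apply, transpose_apply,
    diagonal_apply, mul_ite, mul_zero, Finset.sum_ite_eq', Finset.mem_univ, if_true, pow_add]
  exact Finset.sum_congr rfl fun k _ => by ring

theorem det_powerSumHankel_ne_zero [CharZero K] :
    (s.powerSumHankel s.toFinset.card).det ≠ 0 := by
  have hV : (vandermonde s.enumDistinct).det ≠ 0 :=
    det_vandermonde_ne_zero_iff.mpr s.enumDistinct_injective
  rw [powerSumHankel_eq_mul, ← vandermonde, det_mul, det_mul, det_transpose, det_diagonal]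
  refine mul_ne_zero (mul_ne_zero hV (Finset.prod_ne_zero_iff.mpr fun i _ => ?_)) hV
  exact Nat.cast_ne_zero.mpr (count_ne_zero.mpr (s.enumDistinct_mem i))

theorem le_card_toFinset_of_det_powerSumHankel_ne_zero {N : ℕ}
    (h : (s.powerSumHankel N).det ≠ 0) : N ≤ s.toFinset.card := by
  calc N = (s.powerSumHankel N).rank := by rw [rank_of_det_ne_zero h, Fintype.card_fin]
    _ ≤ (of fun i (j : Fin N) => s.enumDistinct i ^ (j : ℕ)).rank := by
      rw [powerSumHankel_eq_mul]; exact rank_mul_le_right _ _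
    _ ≤ s.toFinset.card := (rank_le_card_height _).trans_eq (Fintype.card_fin _)

theorem monic_distinctRootsPoly : s.distinctRootsPoly.Monic :=
  monic_prod_of_monic _ _ fun a _ => monic_X_sub_C a

theorem natDegree_distinctRootsPoly : s.distinctRootsPoly.natDegree = s.toFinset.card := by
  rw [distinctRootsPoly, natDegree_prod _ _ fun a _ => X_sub_C_ne_zero a]
  simp

theorem isRoot_distinctRootsPoly_iff {a : K} : s.distinctRootsPoly.IsRoot a ↔ a ∈ s := by
  rw [← mem_roots s.monic_distinctRootsPoly.ne_zero, distinctRootsPoly, roots_prod_X_sub_C,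
    Finset.mem_val, mem_toFinset]

theorem eval_derivative_distinctRootsPoly_ne_zero {a : K} (ha : a ∈ s) :
    s.distinctRootsPoly.derivative.eval a ≠ 0 := by
  rw [distinctRootsPoly, Finset.prod_eq_multiset_prod, toFinset_val,
    eval_multiset_prod_X_sub_C_derivative (mem_dedup.mpr ha)]
  refine prod_ne_zero fun h0 => ?_
  obtain ⟨b, hb, hab⟩ := mem_map.mp h0
  rw [sub_eq_zero] at hab
  exact (nodup_dedup s).notMem_erase (hab ▸ hb)

theorem sum_coeff_distinctRootsPoly_mul_powerSum (i : ℕ) :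
    ∑ t ∈ Finset.range (s.toFinset.card + 1), s.distinctRootsPoly.coeff t * s.powerSum (i + t)
      = 0 := by
  simp only [powerSum_eq_sum_count, Finset.mul_sum]
  rw [Finset.sum_comm]
  refine Finset.sum_eq_zero fun a ha => ?_
  have hroot := (s.isRoot_distinctRootsPoly_iff.mpr (mem_toFinset.mp ha)).eq_zero
  rw [eval_eq_sum_range' (n := s.toFinset.card + 1)
    (by rw [natDegree_distinctRootsPoly]; omega)] at hroot
  calc _ = (s.count a : K) * a ^ i * ∑ t ∈ Finset.range (s.toFinset.card + 1),
        s.distinctRootsPoly.coeff t * a ^ t := by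
          rw [Finset.mul_sum]; exact Finset.sum_congr rfl fun t _ => by ring
    _ = 0 := by rw [hroot, mul_zero]

theorem powerSumHankel_mulVec_coeff :
    s.powerSumHankel s.toFinset.card *ᵥ (fun t => s.distinctRootsPoly.coeff t)
      = fun i : Fin _ => -s.powerSum (i + s.toFinset.card) := by
  ext i
  have h := s.sum_coeff_distinctRootsPoly_mul_powerSum i
  have hlead : s.distinctRootsPoly.coeff s.toFinset.card = 1 := by
    simpa [natDegree_distinctRootsPoly] using s.monic_distinctRootsPoly.coeff_natDegree
  rw [Finset.sum_range_succ, hlead, one_mul, ← Fin.sum_univ_eq_sum_range] at h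
  rw [mulVec, dotProduct, eq_neg_iff_add_eq_zero, ← h]
  simp [powerSumHankel, mul_comm]

theorem coeff_distinctRootsPoly_eq_cramer [CharZero K] {N : ℕ} (hN : s.toFinset.card = N)
    (t : Fin N) : s.distinctRootsPoly.coeff t = (s.powerSumHankel N).det⁻¹ *
      cramer (s.powerSumHankel N) (fun i : Fin N => -s.powerSum (i + N)) t := by
  subst hN
  rw [← powerSumHankel_mulVec_coeff, cramer_eq_adjugate_mulVec, mulVec_mulVec, adjugate_mul,
    smul_mulVec, one_mulVec, Pi.smul_apply, smul_eq_mul, inv_mul_cancel_left₀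
    s.det_powerSumHankel_ne_zero]

end Multiset

namespace Matrix

variable {n K : Type*} [Fintype n] [DecidableEq n] [Field K]

theorem rootMultiplicity_charpoly_add_rank (M : Matrix n n K) (μ : K) :
    M.charpoly.rootMultiplicity μ + ((M - μ • 1) ^ Fintype.card n).rank = Fintype.card n := by
  have hpow : (toLin' M - μ • 1) ^ Fintype.card n = toLin' ((M - μ • 1) ^ Fintype.card n) := by
    rw [toLin'_pow, map_sub, map_smul, toLin'_one, Module.End.one_eq_id]
  have hmul := (toLin' M).finrank_maxGenEigenspace_eq μ
  rw [charpoly_toLin', Module.End.maxGenEigenspace_eq_genEigenspace_finrank,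
    Module.finrank_fintype_fun_eq_card, Module.End.genEigenspace_nat, hpow] at hmul
  rw [← hmul, rank, ← toLin'_apply', add_comm, LinearMap.finrank_range_add_finrank_ker,
    Module.finrank_fintype_fun_eq_card]

variable [IsAlgClosed K]

theorem card_roots_charpoly (M : Matrix n n K) :
    Multiset.card M.charpoly.roots = Fintype.card n := by
  rw [splits_iff_card_roots.mp (IsAlgClosed.splits _), charpoly_natDegree_eq_dim]

theorem det_sub_scalar_eq_prod_roots_charpoly (M : Matrix n n K) (r : K) :
    (M - scalar n r).det = (M.charpoly.roots.map (· - r)).prod := by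
  have h := M.eval_charpoly r
  rw [(IsAlgClosed.splits M.charpoly).eq_prod_roots_of_monic M.charpoly_monic, eval_multiset_prod,
    Multiset.map_map] at h
  calc (M - scalar n r).det = (-1) ^ Fintype.card n * (scalar n r - M).det := by
        rw [← neg_sub, det_neg]
    _ = ((M.charpoly.roots.map (r - ·)).map Neg.neg).prod := by
        rw [Multiset.prod_map_neg, Multiset.card_map, card_roots_charpoly, ← h]
        simp
    _ = _ := by simp [Multiset.map_map]

theorem det_aeval_eq_prod_roots_charpoly (M : Matrix n n K) {q : K[X]} (hq : q.Monic) :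
    (aeval M q).det = (M.charpoly.roots.map fun a => q.eval a).prod := by
  let f : K[X] →* K := detMonoidHom.comp (aeval M).toMonoidHom
  have hf (r : K) : f (X - C r) = (M.charpoly.roots.map (· - r)).prod := by
    rw [← det_sub_scalar_eq_prod_roots_charpoly]
    simp [f, algebraMap_eq_diagonal, scalar_apply, Pi.algebraMap_def]
  change f q = _
  rw [(IsAlgClosed.splits q).eq_prod_roots_of_monic hq, map_multiset_prod, Multiset.map_map]
  simp only [Function.comp_def, hf, eval_multiset_prod, Multiset.map_map, eval_sub, eval_X, eval_C]
  exact Multiset.prod_map_prod_map _ _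

theorem charpoly_pow_eq_prod_roots (M : Matrix n n K) {j : ℕ} (hj : j ≠ 0) :
    (M ^ j).charpoly = ((M.charpoly.roots.map (· ^ j)).map fun a => X - C a).prod := by
  refine Polynomial.funext fun t => ?_
  have h := M.det_aeval_eq_prod_roots_charpoly (monic_X_pow_sub_C t hj)
  simp only [map_sub, map_pow, aeval_X, aeval_C, eval_sub, eval_pow, eval_X, eval_C] at h
  rw [eval_charpoly, eval_multiset_prod, Multiset.map_map, Multiset.map_map]
  calc (scalar n t - M ^ j).det = (-1) ^ Fintype.card n * (M ^ j - algebraMap K _ t).det := by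
        rw [← neg_sub, det_neg]; rfl
    _ = ((M.charpoly.roots.map fun a => a ^ j - t).map Neg.neg).prod := by
        rw [h, Multiset.prod_map_neg, Multiset.card_map, card_roots_charpoly]
    _ = _ := by simp [Multiset.map_map, Function.comp_def]

theorem trace_pow_eq_powerSum_roots_charpoly (M : Matrix n n K) (j : ℕ) :
    (M ^ j).trace = M.charpoly.roots.powerSum j := by
  rcases eq_or_ne j 0 with rfl | hj
  · simp [Multiset.powerSum, card_roots_charpoly]
  · rw [trace_eq_sum_roots_charpoly, charpoly_pow_eq_prod_roots M hj, roots_multiset_prod_X_sub_C]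
    rfl

end Matrix

theorem exists_eventually_eq_of_eventually_le {X : Type*} [TopologicalSpace X] {W : Set X}
    (hW : IsOpen W) (hne : W.Nonempty) {f : X → ℕ} {C : ℕ} (hbdd : ∀ x ∈ W, f x ≤ C)
    (hlsc : ∀ x ∈ W, ∀ᶠ y in 𝓝 x, f x ≤ f y) : ∃ x ∈ W, ∀ᶠ y in 𝓝 x, f y = f x := by
  have hfin : (f '' W).Finite :=
    (Set.finite_Iic C).subset (by rintro _ ⟨x, hx, rfl⟩; exact hbdd x hx)
  obtain ⟨_, ⟨x, hx, rfl⟩, hmax⟩ := Set.exists_max_image _ id hfin (hne.image f)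
  refine ⟨x, hx, ?_⟩
  filter_upwards [hW.mem_nhds hx, hlsc x hx] with y hy hle
  exact le_antisymm (hmax _ ⟨y, hy, rfl⟩) hle

theorem exists_eventually_forall_eq_of_eventually_le {X ι : Type*} [TopologicalSpace X]
    [Fintype ι] {W : Set X} (hW : IsOpen W) (hne : W.Nonempty) {f : ι → X → ℕ} {C : ℕ}
    (hbdd : ∀ i, ∀ x ∈ W, f i x ≤ C) (hlsc : ∀ i, ∀ x ∈ W, ∀ᶠ y in 𝓝 x, f i x ≤ f i y) :
    ∃ x ∈ W, ∀ᶠ y in 𝓝 x, ∀ i, f i y = f i x := by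
  have hlsc' (x) (hx : x ∈ W) : ∀ᶠ y in 𝓝 x, ∀ i, f i x ≤ f i y :=
    eventually_all.mpr fun i => hlsc i x hx
  obtain ⟨x, hx, hsum⟩ := exists_eventually_eq_of_eventually_le hW hne (f := fun x => ∑ i, f i x)
    (fun x hx => Finset.sum_le_card_nsmul _ _ _ fun i _ => hbdd i x hx)
    (fun x hx => (hlsc' x hx).mono fun y hy => Finset.sum_le_sum fun i _ => hy i)
  refine ⟨x, hx, ?_⟩
  filter_upwards [hsum, hlsc' x hx] with y hy hle
  exact fun i => ((Finset.sum_eq_sum_iff_of_le fun i _ => hle i).mp hy.symm i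
    (Finset.mem_univ i)).symm

theorem Matrix.eventually_rank_le {X m n 𝕜 : Type*} [TopologicalSpace X] [Fintype m] [Fintype n]
    [DecidableEq n] [NontriviallyNormedField 𝕜] [CompleteSpace 𝕜] {M : X → Matrix m n 𝕜} {x : X}
    (hM : ContinuousAt M x) : ∀ᶠ y in 𝓝 x, (M x).rank ≤ (M y).rank := by
  let L : Matrix m n 𝕜 →ₗ[𝕜] (n → 𝕜) →L[𝕜] (m → 𝕜) :=
    LinearMap.toContinuousLinearMap.toLinearMap ∘ₗ toLin'.toLinearMap
  have hrank (N : Matrix m n 𝕜) : ((L N : (n → 𝕜) →ₗ[𝕜] (m → 𝕜)).rank) = N.rank := by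
    simp only [L, LinearMap.coe_comp, LinearEquiv.coe_coe, Function.comp_apply,
      LinearMap.coe_toContinuousLinearMap, toLin'_apply', Matrix.rank, LinearMap.rank]
    rw [Module.finrank_eq_rank]
    rfl
  have hopen := isOpen_setOfPred_nat_le_rank (𝕜 := 𝕜) (E := n → 𝕜) (F := m → 𝕜) (M x).rank
  filter_upwards [(L.continuous_of_finiteDimensional.continuousAt.comp hM).preimage_mem_nhds
    (hopen.mem_nhds (by simp [hrank]))] with y hy
  simpa [hrank] using hy

section EntrywiseSmooth

variable {𝕜 E 𝔸 : Type*} [NontriviallyNormedField 𝕜] [NormedAddCommGroup E] [NormedSpace 𝕜 E]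
  [NormedCommRing 𝔸] [NormedAlgebra 𝕜 𝔸] {n : WithTop ℕ∞} {s : Set E}

theorem contDiffOn_matrix_mul_apply {l m o : Type*} [Fintype m] {M : E → Matrix l m 𝔸}
    {N : E → Matrix m o 𝔸} (hM : ∀ i j, ContDiffOn 𝕜 n (fun x => M x i j) s)
    (hN : ∀ i j, ContDiffOn 𝕜 n (fun x => N x i j) s) (i : l) (j : o) :
    ContDiffOn 𝕜 n (fun x => (M x * N x) i j) s := by
  simp only [mul_apply]
  exact ContDiffOn.sum fun k _ => (hM i k).mul (hN k j)

theorem contDiffOn_matrix_pow_apply {ι : Type*} [Fintype ι] [DecidableEq ι] {M : E → Matrix ι ι 𝔸}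
    (hM : ∀ i j, ContDiffOn 𝕜 n (fun x => M x i j) s) (k : ℕ) (i j : ι) :
    ContDiffOn 𝕜 n (fun x => (M x ^ k) i j) s := by
  induction k generalizing i j with
  | zero => simpa [one_apply] using contDiffOn_const
  | succ k ih => simpa only [pow_succ] using contDiffOn_matrix_mul_apply ih hM i j

theorem contDiffOn_det {ι : Type*} [Fintype ι] [DecidableEq ι] {M : E → Matrix ι ι 𝔸}
    (hM : ∀ i j, ContDiffOn 𝕜 n (fun x => M x i j) s) :
    ContDiffOn 𝕜 n (fun x => (M x).det) s := by
  simp only [det_apply']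
  exact ContDiffOn.sum fun σ _ => contDiffOn_const.mul (contDiffOn_prod fun i _ => hM (σ i) i)

theorem contDiffOn_eval_of_contDiffOn_coeff {G : E → 𝔸[X]} {N : ℕ}
    (hG : ∀ t, ContDiffOn 𝕜 n (fun x => (G x).coeff t) s) (hdeg : ∀ x ∈ s, (G x).natDegree ≤ N) :
    ContDiffOn 𝕜 n (fun v : E × 𝔸 => (G v.1).eval v.2) (s ×ˢ Set.univ) := by
  refine (ContDiffOn.sum fun t _ => ((hG t).comp contDiffOn_fst fun v hv => hv.1).mul
    (contDiffOn_snd.pow t) : ContDiffOn 𝕜 n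
      (fun v : E × 𝔸 => ∑ t ∈ Finset.range (N + 1), (G v.1).coeff t * v.2 ^ t) _).congr ?_
  intro v hv
  exact eval_eq_sum_range' (Nat.lt_succ_of_le (hdeg v.1 hv.1)) v.2

end EntrywiseSmooth

section Implicit

variable {𝕜 E₁ E₂ F : Type*} [RCLike 𝕜]
  [NormedAddCommGroup E₁] [NormedSpace 𝕜 E₁] [CompleteSpace E₁]
  [NormedAddCommGroup E₂] [NormedSpace 𝕜 E₂] [CompleteSpace E₂]
  [NormedAddCommGroup F] [NormedSpace 𝕜 F] [CompleteSpace F]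
  {f : E₁ × E₂ → F} {n : WithTop ℕ∞}

/-- By local uniqueness, `ψ` agrees near `x` with the implicit function at `(x, ψ x)`. -/
theorem contDiffAt_of_eventually_apply_eq {ψ : E₁ → E₂} {x : E₁}
    (hf : ContDiffAt 𝕜 n f (x, ψ x)) (hn : n ≠ 0)
    (hinv : (fderiv 𝕜 f (x, ψ x) ∘L .inr 𝕜 E₁ E₂).IsInvertible) (hψ : ContinuousAt ψ x)
    (hfψ : ∀ᶠ y in 𝓝 x, f (y, ψ y) = f (x, ψ x)) : ContDiffAt 𝕜 n ψ x := by
  have htend : Tendsto (fun y => (y, ψ y)) (𝓝 x) (𝓝 (x, ψ x)) := continuousAt_id.prodMk hψ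
  refine (hf.contDiffAt_implicitFunction hn hinv).congr_of_eventuallyEq ?_
  filter_upwards [htend.eventually (hf.eventually_apply_eq_iff_implicitFunction hn hinv), hfψ]
    with y hiff hy
  exact (hiff.mp hy).symm

theorem exists_eventually_contDiffAt_implicit {u : E₁ × E₂} (hn : n ≠ 0)
    (hf : ∀ᶠ v in 𝓝 u, ContDiffAt 𝕜 n f v ∧ (fderiv 𝕜 f v ∘L .inr 𝕜 E₁ E₂).IsInvertible) :
    ∃ ψ : E₁ → E₂, ψ u.1 = u.2 ∧ ∀ᶠ x in 𝓝 u.1, ContDiffAt 𝕜 n ψ x ∧ f (x, ψ x) = f u := by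
  obtain ⟨hfu, hinvu⟩ := hf.self_of_nhds
  set ψ := hfu.implicitFunction hn hinvu
  have hψ : ContDiffAt 𝕜 n ψ u.1 := hfu.contDiffAt_implicitFunction hn hinvu
  have hψu : ψ u.1 = u.2 := hfu.implicitFunction_apply_self hn hinvu
  -- `ψ` is only known to be `C^n` at `u.1`; for `n = ∞` this does not spread to a neighbourhood,
  -- but being `C^1` does, and continuity is all `contDiffAt_of_eventually_apply_eq` needs.
  have hcont : ∀ᶠ x in 𝓝 u.1, ContinuousAt ψ x :=
    ((hψ.of_le (ENat.one_le_iff_ne_zero_withTop.mpr hn)).eventually (by simp)).mono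
      fun _ h => h.continuousAt
  have htend : Tendsto (fun x => (x, ψ x)) (𝓝 u.1) (𝓝 u) := by
    simpa [ContinuousAt, hψu] using continuousAt_id.prodMk hψ.continuousAt
  have hgood := hcont.and
    ((htend.eventually hf).and (hfu.eventually_apply_implicitFunction hn hinvu))
  refine ⟨ψ, hψu, ?_⟩
  filter_upwards [hgood.eventually_nhds] with x hx
  obtain ⟨hcx, ⟨hfx, hinvx⟩, hfxu⟩ := hx.self_of_nhds
  exact ⟨contDiffAt_of_eventually_apply_eq hfx hn hinvx hcx
    (hx.mono fun y hy => hy.2.2.trans hfxu.symm), hfxu⟩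

end Implicit

theorem exists_eventually_contDiffAt_isRoot {E : Type*} [NormedAddCommGroup E] [NormedSpace ℝ E]
    [CompleteSpace E] {G : E → ℂ[X]} {U₀ : Set E} {N : ℕ} {x₀ : E} {z₀ : ℂ} (hU₀ : IsOpen U₀)
    (hx₀ : x₀ ∈ U₀) (hG : ∀ t, ContDiffOn ℝ ∞ (fun x => (G x).coeff t) U₀)
    (hdeg : ∀ x ∈ U₀, (G x).natDegree ≤ N) (hroot : (G x₀).IsRoot z₀)
    (hsimple : (G x₀).derivative.eval z₀ ≠ 0) :
    ∃ lam : E → ℂ, lam x₀ = z₀ ∧ ∀ᶠ x in 𝓝 x₀, ContDiffAt ℝ ∞ lam x ∧ (G x).IsRoot (lam x) := by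
  let f : E × ℂ → ℂ := fun v => (G v.1).eval v.2
  have hopen : IsOpen (U₀ ×ˢ Set.univ : Set (E × ℂ)) := hU₀.prod isOpen_univ
  have hf : ∀ v ∈ U₀ ×ˢ Set.univ, ContDiffAt ℝ ∞ f v := fun v hv =>
    (contDiffOn_eval_of_contDiffOn_coeff hG hdeg).contDiffAt (hopen.mem_nhds hv)
  have hf' : ContinuousOn (fun v : E × ℂ => (G v.1).derivative.eval v.2) (U₀ ×ˢ Set.univ) := by
    refine (contDiffOn_eval_of_contDiffOn_coeff (𝕜 := ℝ) (n := 0) (N := N) (fun t => ?_)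
      fun x hx => (natDegree_derivative_le _).trans ((Nat.sub_le _ _).trans (hdeg x hx))
      ).continuousOn
    simp only [coeff_derivative]
    exact ((hG (t + 1)).of_le (by simp)).mul contDiffOn_const
  have hpartial : ∀ v ∈ U₀ ×ˢ Set.univ,
      fderiv ℝ f v ∘L .inr ℝ E ℂ = (G v.1).derivative.eval v.2 • (1 : ℂ →L[ℝ] ℂ) := by
    rintro ⟨x, z⟩ hv
    have hcomp : HasFDerivAt (fun z => f (x, z)) (fderiv ℝ f (x, z) ∘L .inr ℝ E ℂ) z :=
      ((hf _ hv).differentiableAt (by simp)).hasFDerivAt.comp z (hasFDerivAt_prodMk_right x z)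
    exact hcomp.unique ((G x).hasDerivAt z).complexToReal_fderiv
  have hinv {w : ℂ} (hw : w ≠ 0) : (w • (1 : ℂ →L[ℝ] ℂ)).IsInvertible :=
    .of_inverse (g := w⁻¹ • 1) (by ext; simp [hw]) (by ext; simp [hw])
  have hmem : U₀ ×ˢ Set.univ ∈ 𝓝 (x₀, z₀) := hopen.mem_nhds ⟨hx₀, trivial⟩
  have hgood : ∀ᶠ v in 𝓝 (x₀, z₀),
      ContDiffAt ℝ ∞ f v ∧ (fderiv ℝ f v ∘L .inr ℝ E ℂ).IsInvertible := by
    filter_upwards [hmem, (hf'.continuousAt hmem).eventually_ne hsimple] with v hv hne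
    exact ⟨hf v hv, hpartial v hv ▸ hinv hne⟩
  obtain ⟨lam, hlam₀, hlam⟩ := exists_eventually_contDiffAt_implicit (by simp) hgood
  exact ⟨lam, hlam₀, hlam.mono fun x hx => ⟨hx.1, hx.2.trans hroot⟩⟩

theorem Polynomial.eq_prod_X_sub_C_pow_rootMultiplicity {K ι : Type*} [Field K] [DecidableEq K]
    [Fintype ι] {p : K[X]} (hp : p.Monic) (hsplit : p.Splits) {lam : ι → K}
    (hinj : Function.Injective lam) (hmem : ∀ k, lam k ∈ p.roots)
    (hcard : p.roots.toFinset.card = Fintype.card ι) :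
    p = ∏ k, (X - C (lam k)) ^ p.rootMultiplicity (lam k) := by
  have himg : p.roots.toFinset = Finset.univ.image lam :=
    (Finset.eq_of_subset_of_card_le
      (Finset.image_subset_iff.mpr fun k _ => Multiset.mem_toFinset.mpr (hmem k))
      (by rw [Finset.card_image_of_injective _ hinj, Finset.card_univ, hcard])).symm
  conv_lhs => rw [hsplit.eq_prod_roots_of_monic hp, prod_multiset_root_eq_finset_root, himg,
    Finset.prod_image fun a _ b _ h => hinj h]

section MatrixFamily

variable {E ι : Type*} [NormedAddCommGroup E] [NormedSpace ℝ E] [Fintype ι] [DecidableEq ι]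
  {U : Set E} {A : E → Matrix ι ι ℂ}

theorem contDiffOn_powerSum_roots_charpoly {n : WithTop ℕ∞}
    (hA : ∀ i j, ContDiffOn ℝ n (fun x => A x i j) U) (j : ℕ) :
    ContDiffOn ℝ n (fun x => (A x).charpoly.roots.powerSum j) U := by
  simp only [← trace_pow_eq_powerSum_roots_charpoly, trace, diag]
  exact ContDiffOn.sum fun i _ => contDiffOn_matrix_pow_apply hA j i i

theorem contDiffOn_powerSumHankel_roots_charpoly_apply {n : WithTop ℕ∞}
    (hA : ∀ i j, ContDiffOn ℝ n (fun x => A x i j) U) (N : ℕ) (i j : Fin N) :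
    ContDiffOn ℝ n (fun x => (A x).charpoly.roots.powerSumHankel N i j) U :=
  contDiffOn_powerSum_roots_charpoly hA _

theorem eventually_card_toFinset_roots_charpoly_le (hU : IsOpen U)
    (hA : ∀ i j, ContinuousOn (fun x => A x i j) U) {x : E} (hx : x ∈ U) :
    ∀ᶠ y in 𝓝 x, (A x).charpoly.roots.toFinset.card ≤ (A y).charpoly.roots.toFinset.card := by
  have hdet : ContinuousOn (fun y => ((A y).charpoly.roots.powerSumHankel
      (A x).charpoly.roots.toFinset.card).det) U :=
    (contDiffOn_det (contDiffOn_powerSumHankel_roots_charpoly_apply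
      (fun i j => contDiffOn_zero.mpr (hA i j)) _)).continuousOn
  filter_upwards [(hdet.continuousAt (hU.mem_nhds hx)).eventually_ne
    (A x).charpoly.roots.det_powerSumHankel_ne_zero] with y hy
  exact Multiset.le_card_toFinset_of_det_powerSumHankel_ne_zero _ hy

theorem contDiffOn_coeff_distinctRootsPoly_roots_charpoly {n : WithTop ℕ∞} {S : Set E}
    (hSU : S ⊆ U) (hA : ∀ i j, ContDiffOn ℝ n (fun x => A x i j) U) {N : ℕ}
    (hN : ∀ x ∈ S, (A x).charpoly.roots.toFinset.card = N) (t : ℕ) :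
    ContDiffOn ℝ n (fun x => (A x).charpoly.roots.distinctRootsPoly.coeff t) S := by
  have hH := fun i j => (contDiffOn_powerSumHankel_roots_charpoly_apply hA N i j).mono hSU
  rcases lt_trichotomy t N with ht | rfl | ht
  · have hdet := (contDiffOn_det hH).inv fun x hx =>
      (hN x hx) ▸ (A x).charpoly.roots.det_powerSumHankel_ne_zero
    refine (hdet.mul (contDiffOn_det fun i j => ?_)).congr fun x hx =>
      Multiset.coeff_distinctRootsPoly_eq_cramer _ (hN x hx) ⟨t, ht⟩
    by_cases hj : j = ⟨t, ht⟩
    · simpa [updateCol_apply, hj] using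
        ((contDiffOn_powerSum_roots_charpoly hA _).mono hSU).neg
    · simpa [updateCol_apply, hj] using hH i j
  · refine contDiffOn_const.congr fun x hx => (?_ : _ = (1 : ℂ))
    rw [← hN x hx, ← Multiset.natDegree_distinctRootsPoly]
    exact (Multiset.monic_distinctRootsPoly _).coeff_natDegree
  · refine contDiffOn_const.congr fun x hx => (?_ : _ = (0 : ℂ))
    rw [coeff_eq_zero_of_natDegree_lt]
    rwa [Multiset.natDegree_distinctRootsPoly, hN x hx]

theorem exists_eventually_eigenvalue_functions [CompleteSpace E] (hU : IsOpen U)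
    (hA : ∀ i j, ContDiffOn ℝ ∞ (fun x => A x i j) U) {x₀ : E} (hx₀ : x₀ ∈ U)
    (hconst : ∀ᶠ x in 𝓝 x₀,
      (A x).charpoly.roots.toFinset.card = (A x₀).charpoly.roots.toFinset.card) :
    ∃ lam : Fin (A x₀).charpoly.roots.toFinset.card → E → ℂ, ∀ᶠ x in 𝓝 x₀,
      (∀ k, ContDiffAt ℝ ∞ (lam k) x) ∧ Function.Injective (lam · x) ∧
        (A x).charpoly = ∏ k, (X - C (lam k x)) ^ (A x).charpoly.rootMultiplicity (lam k x) := by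
  set N := (A x₀).charpoly.roots.toFinset.card
  obtain ⟨U₀, hU₀, hU₀open, hx₀U₀⟩ := mem_nhds_iff.mp (inter_mem hconst (hU.mem_nhds hx₀))
  have hroots (k : Fin N) := exists_eventually_contDiffAt_isRoot hU₀open hx₀U₀
    (contDiffOn_coeff_distinctRootsPoly_roots_charpoly (fun x hx => (hU₀ hx).2) hA
      fun x hx => (hU₀ hx).1)
    (fun x hx => (Multiset.natDegree_distinctRootsPoly _).trans_le (hU₀ hx).1.le)
    ((Multiset.isRoot_distinctRootsPoly_iff _).mpr (Multiset.enumDistinct_mem _ k))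
    (Multiset.eval_derivative_distinctRootsPoly_ne_zero _ (Multiset.enumDistinct_mem _ k))
  choose lam hlam₀ hlam using hroots
  have hcont (k : Fin N) : ContinuousAt (lam k) x₀ := (hlam k).self_of_nhds.1.continuousAt
  have hne : ∀ᶠ x in 𝓝 x₀, ∀ k k', k ≠ k' → lam k x ≠ lam k' x := by
    refine eventually_all.mpr fun k => eventually_all.mpr fun k' => ?_
    by_cases hkk' : k = k'
    · exact Eventually.of_forall fun _ h => absurd hkk' h
    · have h₀ : lam k x₀ - lam k' x₀ ≠ 0 := by
        rw [hlam₀, hlam₀, sub_ne_zero]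
        exact (Multiset.enumDistinct_injective _).ne hkk'
      exact (((hcont k).sub (hcont k')).eventually_ne h₀).mono fun x hx _ => sub_ne_zero.mp hx
  refine ⟨lam, ?_⟩
  filter_upwards [eventually_all.mpr hlam, hne, hconst] with x hx hxne hxN
  have hinj : Function.Injective (lam · x) := fun k k' h => by_contra fun hkk' => hxne k k' hkk' h
  refine ⟨fun k => (hx k).1, hinj, eq_prod_X_sub_C_pow_rootMultiplicity (charpoly_monic _)
    (IsAlgClosed.splits _) hinj (fun k => ?_) (by rw [hxN, Fintype.card_fin])⟩
  exact (Multiset.isRoot_distinctRootsPoly_iff _).mp (hx k).2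

end MatrixFamily

section ConstAlgType

variable {d m : ℕ} {U : Set (Fin d → ℝ)} {A : (Fin d → ℝ) → Matrix (Fin m) (Fin m) ℂ}

theorem isOpen_setOf_hasConstAlgType : IsOpen {p | p ∈ U ∧ HasConstAlgType A U p} := by
  rw [isOpen_iff_forall_mem_open]
  rintro p ⟨-, V, hVopen, hpV, hVU, rest⟩
  exact ⟨V, fun q hq => ⟨hVU hq, V, hVopen, hq, hVU, rest⟩, hVopen, hpV⟩

theorem hasConstAlgType_of_eventually (hU : IsOpen U) {p : Fin d → ℝ} (hp : p ∈ U) {s : ℕ}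
    {lam : Fin s → (Fin d → ℝ) → ℂ} {b : Fin s → ℕ} {dd : Fin s → Fin m → ℕ}
    (h : ∀ᶠ x in 𝓝 p, (∀ k, ContDiffAt ℝ ∞ (lam k) x) ∧
      (∀ k k', k ≠ k' → lam k x ≠ lam k' x) ∧
      (A x).charpoly = ∏ k, (X - C (lam k x)) ^ b k ∧
      ∀ k (j : Fin m), ((A x - lam k x • (1 : Matrix (Fin m) (Fin m) ℂ)) ^ ((j : ℕ) + 1)).rank =
        dd k j) :
    HasConstAlgType A U p := by
  obtain ⟨V, hV, hVopen, hpV⟩ := mem_nhds_iff.mp (inter_mem h (hU.mem_nhds hp))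
  exact ⟨V, hVopen, hpV, fun x hx => (hV hx).2, s, lam, b, dd,
    fun k x hx => ((hV hx).1.1 k).contDiffWithinAt, fun x hx => (hV hx).1.2.1,
    fun x hx => (hV hx).1.2.2.1, fun x hx => (hV hx).1.2.2.2⟩

theorem exists_mem_hasConstAlgType_of_eigenvalue_functions (hU : IsOpen U)
    (hA : ∀ i j, ContinuousOn (fun x => A x i j) U) {W : Set (Fin d → ℝ)} (hW : IsOpen W)
    (hne : W.Nonempty) (hWU : W ⊆ U) {N : ℕ} {lam : Fin N → (Fin d → ℝ) → ℂ}
    (hlam : ∀ x ∈ W, (∀ k, ContDiffAt ℝ ∞ (lam k) x) ∧ Function.Injective (lam · x) ∧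
      (A x).charpoly = ∏ k, (X - C (lam k x)) ^ (A x).charpoly.rootMultiplicity (lam k x)) :
    ∃ x ∈ W, HasConstAlgType A U x := by
  let M : Fin N → (Fin d → ℝ) → Matrix (Fin m) (Fin m) ℂ := fun k x => A x - lam k x • 1
  have hM (k : Fin N) {x} (hx : x ∈ W) : ContinuousAt (M k) x :=
    (continuousAt_pi.mpr fun i => continuousAt_pi.mpr fun j =>
      (hA i j).continuousAt (hU.mem_nhds (hWU hx))).sub
        (((hlam x hx).1 k).continuousAt.smul continuousAt_const)
  have hbdd (q : Fin N × Fin m) (x) (_ : x ∈ W) : (M q.1 x ^ ((q.2 : ℕ) + 1)).rank ≤ m :=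
    rank_le_height _
  have hlsc (q : Fin N × Fin m) (x) (hx : x ∈ W) :
      ∀ᶠ y in 𝓝 x, (M q.1 x ^ ((q.2 : ℕ) + 1)).rank ≤ (M q.1 y ^ ((q.2 : ℕ) + 1)).rank :=
    eventually_rank_le (M := fun y => M q.1 y ^ ((q.2 : ℕ) + 1)) ((hM q.1 hx).pow _)
  obtain ⟨x₁, hx₁, hrank⟩ := exists_eventually_forall_eq_of_eventually_le hW hne hbdd hlsc
  have hrank_m : ∀ᶠ y in 𝓝 x₁, ∀ k, (M k y ^ m).rank = (M k x₁ ^ m).rank := by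
    cases m with
    | zero => exact Eventually.of_forall fun y k => by simp
    | succ m => exact hrank.mono fun y hy k => hy (k, Fin.last m)
  refine ⟨x₁, hx₁, hasConstAlgType_of_eventually hU (hWU hx₁) (lam := lam)
    (b := fun k => (A x₁).charpoly.rootMultiplicity (lam k x₁))
    (dd := fun k j => (M k x₁ ^ ((j : ℕ) + 1)).rank) ?_⟩
  filter_upwards [hW.mem_nhds hx₁, hrank, hrank_m] with y hy hyrank hyrank_m
  obtain ⟨hsmooth, hinj, hcharpoly⟩ := hlam y hy
  refine ⟨hsmooth, fun k k' hkk' => hinj.ne hkk', ?_, fun k j => hyrank (k, j)⟩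
  refine hcharpoly.trans (Finset.prod_congr rfl fun k _ => congrArg _ ?_)
  have hy_add := (A y).rootMultiplicity_charpoly_add_rank (lam k y)
  have hx₁_add := (A x₁).rootMultiplicity_charpoly_add_rank (lam k x₁)
  rw [Fintype.card_fin] at hy_add hx₁_add
  have hrank_k : ((A y - lam k y • 1) ^ m).rank = ((A x₁ - lam k x₁ • 1) ^ m).rank :=
    hyrank_m k
  omega

theorem exists_mem_hasConstAlgType (hU : IsOpen U)
    (hA : ∀ i j, ContDiffOn ℝ ∞ (fun x => A x i j) U) {W : Set (Fin d → ℝ)} (hW : IsOpen W)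
    (hne : W.Nonempty) (hWU : W ⊆ U) :
    ∃ x ∈ W, HasConstAlgType A U x := by
  have hAc (i j) := (hA i j).continuousOn
  obtain ⟨x₀, hx₀, hconst⟩ := exists_eventually_eq_of_eventually_le hW hne
    (f := fun x => (A x).charpoly.roots.toFinset.card) (C := m)
    (fun x _ => (Multiset.toFinset_card_le _).trans_eq
      ((card_roots_charpoly _).trans (Fintype.card_fin m)))
    (fun x hx => eventually_card_toFinset_roots_charpoly_le hU hAc (hWU hx))
  obtain ⟨lam, hlam⟩ := exists_eventually_eigenvalue_functions hU hA (hWU hx₀) hconst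
  obtain ⟨W₁, hW₁, hW₁open, hx₀W₁⟩ := mem_nhds_iff.mp (inter_mem hlam (hW.mem_nhds hx₀))
  obtain ⟨x, hx, hxconst⟩ := exists_mem_hasConstAlgType_of_eigenvalue_functions hU hAc hW₁open
    ⟨x₀, hx₀W₁⟩ (fun x hx => hWU (hW₁ hx).2) (fun x hx => (hW₁ hx).1)
  exact ⟨x, (hW₁ hx).2, hxconst⟩

end ConstAlgType

/-- Lemma 3.1 (matrix-family form): for a smooth family of complex matrices, the set of
points near which the family has constant algebraic type is open and dense in `U`. -/
theorem lemma_3_1 {d m : ℕ} (U : Set (Fin d → ℝ)) (hU : IsOpen U)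
    (A : (Fin d → ℝ) → Matrix (Fin m) (Fin m) ℂ)
    (hA : ∀ i j, ContDiffOn ℝ (⊤ : ℕ∞) (fun x => A x i j) U) :
    IsOpen {p | p ∈ U ∧ HasConstAlgType A U p} ∧
      U ⊆ closure {p | p ∈ U ∧ HasConstAlgType A U p} := by
  refine ⟨isOpen_setOf_hasConstAlgType, fun p hp => mem_closure_iff.mpr fun W hW hpW => ?_⟩
  obtain ⟨x, ⟨hxW, hxU⟩, hx⟩ :=
    exists_mem_hasConstAlgType hU hA (hW.inter hU) ⟨p, hpW, hp⟩ Set.inter_subset_right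
  exact ⟨x, hxW, hxU, hx⟩
end

section
/- (Root-counting continuity, proof step of Lemma 3.1.) Let X be a topological space, φ : X → Polynomial ℂ a continuous family of monic polynomials of degree n, p ∈ X, a ∈ ℂ, and let b be the multiplicity of a as a root of φ(p) (b = rootMultiplicity a (φ p); b = 0 if a is not a root). Then there exists ε₀ > 0 such that for every ε with 0 < ε ≤ ε₀ there is an open neighborhood U of p such that for every q ∈ U the number of roots of φ(q) lying in the open disc {z ∈ ℂ : |z − a| < ε}, counted with multiplicity, equals b. -/
/-!
Send a root vector `r : Fin n → K` to the lower coefficients of `∏ i, (X - C (r i))`. This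
map is continuous, and by Cauchy's bound on the roots of a monic polynomial it is proper, hence
closed. "At least `k` entries of `r` lie in the closed set `S`" is a closed condition on `r`, so
its image is closed: for a continuous family of monic polynomials of degree `n`, the number of
roots in a closed set is upper semicontinuous, and, passing to complements, the number of roots
in an open set is lower semicontinuous.

Choose `ε₀` so that `a` is the only root of `φ p` in the closed `ε₀`-disc. For `ε ≤ ε₀`, near
`p` the open `ε`-disc contains at least `b` roots and the closed one at most `b`.
-/

open Polynomial

theorem isClosed_setOf_le_card_filter {α ι : Type*} [TopologicalSpace α] [Fintype ι]
    {P : α → Prop} [DecidablePred P] (hP : IsClosed {z | P z}) (k : ℕ) :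
    IsClosed {r : ι → α | k ≤ (Finset.univ.filter fun i => P (r i)).card} := by
  have husc : UpperSemicontinuous
      fun r : ι → α => (Finset.univ.filter fun i => P (r i)).card := by
    simp only [Finset.card_filter]
    refine upperSemicontinuous_sum fun i _ => ?_
    have hPi : IsClosed {r : ι → α | P (r i)} := hP.preimage (continuous_apply i)
    convert hPi.upperSemicontinuous_indicator (zero_le_one (α := ℕ)) using 2 with r
    · rfl
    · simp [Set.indicator_apply]
  exact husc.isClosed_preimage k

theorem Multiset.exists_fin_univ_val_map_eq {α : Type*} {n : ℕ} (s : Multiset α)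
    (hs : Multiset.card s = n) : ∃ r : Fin n → α, Finset.univ.val.map r = s := by
  obtain ⟨l, rfl⟩ : ∃ l : List α, (l : Multiset α) = s := Quotient.exists_rep s
  rw [Multiset.coe_card] at hs
  subst hs
  exact ⟨l.get, by rw [Fin.univ_val_map, List.ofFn_get]⟩

theorem Multiset.card_filter_le_count {α : Type*} [DecidableEq α] {s : Multiset α}
    {P : α → Prop} [DecidablePred P] {a : α} (h : ∀ z ∈ s, P z → z = a) :
    (s.filter P).card ≤ s.count a := by
  rw [Multiset.count_eq_card_filter_eq]
  refine Multiset.card_le_card (Multiset.le_filter.2 ⟨Multiset.filter_le _ _, fun z hz => ?_⟩)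
  rw [Multiset.mem_filter] at hz
  exact (h z hz.1 hz.2).symm

theorem Multiset.count_le_card_filter {α : Type*} [DecidableEq α] (s : Multiset α)
    {P : α → Prop} [DecidablePred P] {a : α} (ha : P a) : s.count a ≤ (s.filter P).card := by
  rw [Multiset.count_eq_card_filter_eq]
  exact Multiset.card_le_card (Multiset.monotone_filter_right _ fun z hz => hz ▸ ha)

theorem Multiset.exists_pos_forall_dist_le_imp_eq {α : Type*} [MetricSpace α] (s : Multiset α)
    (a : α) : ∃ ε > 0, ∀ z ∈ s, dist z a ≤ ε → z = a := by
  classical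
  have hnhds : ((s.toFinset.erase a : Finset α) : Set α)ᶜ ∈ nhds a :=
    (s.toFinset.erase a).finite_toSet.isClosed.isOpen_compl.mem_nhds (by simp)
  obtain ⟨ε, hε, hball⟩ := Metric.nhds_basis_closedBall.mem_iff.1 hnhds
  refine ⟨ε, hε, fun z hz hza => by_contra fun hne => hball hza ?_⟩
  simp [hne, hz]

namespace Polynomial

theorem Monic.eq_of_natDegree_eq_of_coeff_lt_eq {R : Type*} [CommSemiring R] {p q : R[X]}
    (hp : p.Monic) (hq : q.Monic) (hdeg : p.natDegree = q.natDegree)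
    (h : ∀ j < p.natDegree, p.coeff j = q.coeff j) : p = q := by
  rw [hp.as_sum, hq.as_sum, ← hdeg]
  congr 1
  exact Finset.sum_congr rfl fun j hj => by rw [h j (Finset.mem_range.1 hj)]

theorem Monic.norm_lt_of_isRoot {K : Type*} [NormedDivisionRing K] {p : K[X]} (hp : p.Monic)
    {R : ℝ} (hR0 : 0 ≤ R) (hR : ∀ j < p.natDegree, ‖p.coeff j‖ ≤ R) {a : K}
    (ha : p.IsRoot a) : ‖a‖ < R + 1 := by
  have hbound : cauchyBound p ≤ ⟨R, hR0⟩ + 1 := by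
    rw [cauchyBound, hp.leadingCoeff, nnnorm_one, div_one]
    exact add_le_add_left (Finset.sup_le fun j hj =>
      show ‖p.coeff j‖₊ ≤ ⟨R, hR0⟩ from hR j (Finset.mem_range.1 hj)) 1
  exact (NNReal.coe_lt_coe.2 ((ha.norm_lt_cauchyBound hp.ne_zero).trans_le hbound) :)

section CommRing

variable {R : Type*} [CommRing R]

theorem roots_prod_univ_X_sub_C [IsDomain R] {ι : Type*} [Fintype ι] (r : ι → R) :
    (∏ i, (X - C (r i))).roots = Finset.univ.val.map r := by
  rw [Finset.prod_eq_multiset_prod, ← roots_multiset_prod_X_sub_C (Finset.univ.val.map r),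
    Multiset.map_map]
  rfl

theorem continuous_coeff_prod_X_sub_C [TopologicalSpace R] [IsTopologicalRing R] {ι : Type*}
    [Fintype ι] (j : ℕ) : Continuous fun r : ι → R => (∏ i, (X - C (r i))).coeff j := by
  have h : ∀ r : ι → R, (∏ i, (X - C (r i))) =
      (∏ i, (X - C (MvPolynomial.X i)) : (MvPolynomial ι R)[X]).map (MvPolynomial.eval r) := by
    intro r
    simp [Polynomial.map_prod]
  simp_rw [h, coeff_map]
  exact MvPolynomial.continuous_eval _

noncomputable def coeffsOfRoots (n : ℕ) (r : Fin n → R) : Fin n → R :=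
  fun j => (∏ i, (X - C (r i))).coeff j

theorem continuous_coeffsOfRoots [TopologicalSpace R] [IsTopologicalRing R] (n : ℕ) :
    Continuous (coeffsOfRoots (R := R) n) :=
  continuous_pi fun j => continuous_coeff_prod_X_sub_C j

theorem coeffsOfRoots_eq_iff [IsDomain R] {n : ℕ} {p : R[X]} (hp : p.Monic)
    (hdeg : p.natDegree = n) (hroots : Multiset.card p.roots = n) (r : Fin n → R) :
    coeffsOfRoots n r = (fun j : Fin n => p.coeff j) ↔ Finset.univ.val.map r = p.roots := by
  have hq := monic_prod_X_sub_C r Finset.univ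
  have hqdeg : (∏ i, (X - C (r i))).natDegree = n := by simp
  constructor
  · intro h
    rw [← roots_prod_univ_X_sub_C, hq.eq_of_natDegree_eq_of_coeff_lt_eq hp (hqdeg.trans hdeg.symm)
      fun j hj => congrFun h ⟨j, hqdeg ▸ hj⟩]
  · intro h
    rw [← prod_multiset_X_sub_C_of_monic_of_roots_card_eq hp (hroots.trans hdeg.symm), ← h,
      Multiset.map_map]
    rfl

end CommRing

theorem isProperMap_coeffsOfRoots {K : Type*} [NormedField K] [ProperSpace K] (n : ℕ) :
    IsProperMap (coeffsOfRoots (R := K) n) := by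
  refine isProperMap_iff_isCompact_preimage.2 ⟨continuous_coeffsOfRoots n, fun S hS => ?_⟩
  obtain ⟨R, hR⟩ := isBounded_iff_forall_norm_le.1 hS.isBounded
  refine Metric.isCompact_of_isClosed_isBounded (hS.isClosed.preimage (continuous_coeffsOfRoots n))
    (isBounded_iff_forall_norm_le.2 ⟨R + 1, fun r hr => ?_⟩)
  have hR0 : 0 ≤ R := (norm_nonneg _).trans (hR _ hr)
  refine (pi_norm_le_iff_of_nonneg (by linarith)).2 fun i => ?_
  refine ((monic_prod_X_sub_C r Finset.univ).norm_lt_of_isRoot hR0 (fun j hj => ?_) ?_).le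
  · rw [natDegree_finsetProd_X_sub_C_eq_card, Finset.card_univ, Fintype.card_fin] at hj
    exact (norm_le_pi_norm (coeffsOfRoots n r) ⟨j, hj⟩).trans (hR _ hr)
  · rw [IsRoot, eval_prod]
    exact Finset.prod_eq_zero (Finset.mem_univ i) (by simp)

section Family

variable {K X : Type*} [NormedField K] [ProperSpace K] [IsAlgClosed K] [TopologicalSpace X]
  {n : ℕ} {φ : X → K[X]} {P : K → Prop} [DecidablePred P]

theorem isClosed_setOf_le_card_roots_filter (hmonic : ∀ x, (φ x).Monic)
    (hdeg : ∀ x, (φ x).natDegree = n) (hcont : ∀ j, Continuous fun x => (φ x).coeff j)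
    (hP : IsClosed {z | P z}) (k : ℕ) :
    IsClosed {x | k ≤ ((φ x).roots.filter P).card} := by
  have hcard : ∀ x, Multiset.card (φ x).roots = n := fun x =>
    IsAlgClosed.card_roots_eq_natDegree.trans (hdeg x)
  have hfilter : ∀ r : Fin n → K, (Finset.univ.filter fun i => P (r i)).card
      = ((Finset.univ.val.map r).filter P).card := fun r => by
    rw [Multiset.filter_map, Multiset.card_map]
    rfl
  have hpre : {x | k ≤ ((φ x).roots.filter P).card} =
      (fun x (j : Fin n) => (φ x).coeff j) ⁻¹'
        (coeffsOfRoots n '' {r | k ≤ (Finset.univ.filter fun i => P (r i)).card}) := by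
    ext x
    constructor
    · intro hx
      obtain ⟨r, hr⟩ := (φ x).roots.exists_fin_univ_val_map_eq (hcard x)
      exact ⟨r, by rwa [Set.mem_ofPred_eq, hfilter, hr],
        (coeffsOfRoots_eq_iff (hmonic x) (hdeg x) (hcard x) r).2 hr⟩
    · rintro ⟨r, hr, hrx⟩
      rwa [Set.mem_ofPred_eq, ← (coeffsOfRoots_eq_iff (hmonic x) (hdeg x) (hcard x) r).1 hrx,
        ← hfilter]
  rw [hpre]
  exact ((isProperMap_coeffsOfRoots n).isClosedMap _ (isClosed_setOf_le_card_filter hP k)).preimage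
    (continuous_pi fun j : Fin n => hcont j)

theorem isOpen_setOf_le_card_roots_filter (hmonic : ∀ x, (φ x).Monic)
    (hdeg : ∀ x, (φ x).natDegree = n) (hcont : ∀ j, Continuous fun x => (φ x).coeff j)
    (hP : IsOpen {z | P z}) (k : ℕ) :
    IsOpen {x | k ≤ ((φ x).roots.filter P).card} := by
  have hsplit : ∀ x,
      ((φ x).roots.filter P).card + ((φ x).roots.filter fun z => ¬P z).card = n := fun x => by
    rw [← Multiset.card_add, Multiset.filter_add_not, IsAlgClosed.card_roots_eq_natDegree, hdeg]
  have hcompl : {x | k ≤ ((φ x).roots.filter P).card}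
      = {x | n + 1 - k ≤ ((φ x).roots.filter fun z => ¬P z).card}ᶜ := by
    ext x
    have := hsplit x
    simp only [Set.mem_ofPred_eq, Set.mem_compl_iff]
    omega
  rw [hcompl]
  exact (isClosed_setOf_le_card_roots_filter hmonic hdeg hcont hP.isClosed_compl _).isOpen_compl

end Family

end Polynomial

/-- Root-counting continuity: for a continuous family `φ` of monic complex polynomials of
degree `n`, if `b` is the multiplicity of `a` as a root of `φ(p)`, then for every small
enough `ε > 0` there is a neighborhood `U` of `p` on which the number of roots of `φ(q)` in
the disc of radius `ε` about `a`, counted with multiplicity, equals `b`. -/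
theorem root_counting_continuity {X : Type*} [TopologicalSpace X] {n : ℕ}
    (φ : X → Polynomial ℂ)
    (hmonic : ∀ x, (φ x).Monic) (hdeg : ∀ x, (φ x).natDegree = n)
    (hcont : ∀ j, Continuous fun x => (φ x).coeff j)
    (p : X) (a : ℂ) (b : ℕ) (hb : b = (φ p).rootMultiplicity a) :
    ∃ ε₀ > (0 : ℝ), ∀ ε : ℝ, 0 < ε → ε ≤ ε₀ →
      ∃ U : Set X, IsOpen U ∧ p ∈ U ∧
        ∀ q ∈ U, (((φ q).roots).filter (fun z => dist z a < ε)).card = b := by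
  classical
  have hcount : (φ p).roots.count a = b := by rw [count_roots, hb]
  obtain ⟨ε₀, hε₀, hisolated⟩ := (φ p).roots.exists_pos_forall_dist_le_imp_eq a
  refine ⟨ε₀, hε₀, fun ε hε hεε₀ => ?_⟩
  refine ⟨{q | b ≤ ((φ q).roots.filter fun z => dist z a < ε).card} ∩
      {q | b + 1 ≤ ((φ q).roots.filter fun z => dist z a ≤ ε).card}ᶜ,
    (isOpen_setOf_le_card_roots_filter hmonic hdeg hcont Metric.isOpen_ball b).inter
      (isClosed_setOf_le_card_roots_filter hmonic hdeg hcont Metric.isClosed_closedBall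
        _).isOpen_compl,
    ⟨?_, ?_⟩, ?_⟩
  · exact hcount ▸ (φ p).roots.count_le_card_filter (by simpa using hε)
  · have := Multiset.card_filter_le_count fun z hz (hzε : dist z a ≤ ε) =>
      hisolated z hz (hzε.trans hεε₀)
    simp only [Set.mem_compl_iff, Set.mem_ofPred_eq]
    omega
  · rintro q ⟨hlower, hupper⟩
    have := Multiset.card_le_card
      (Multiset.monotone_filter_right (φ q).roots fun z (hz : dist z a < ε) => hz.le)
    simp only [Set.mem_compl_iff, Set.mem_ofPred_eq] at hlower hupper
    omega
end

section
/- (Proof step of Lemma 3.1.) Let X be a topological space and φ : X → Polynomial ℂ a continuous family of monic polynomials of degree n. Then the set of points p ∈ X such that the number of distinct complex roots of φ(x) (i.e. the function x ↦ (φ x).roots.toFinset.card) is constant on some neighborhood of p is open and dense in X. -/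
/-!
The number of distinct roots is lower semicontinuous in the parameter: at a root `a` of `φ p`,
`‖(φ q).eval a‖ = ∏ ‖a - b‖` over the roots `b` of `φ q` is small for `q` near `p`, so some `b`
is close to `a`, and disjoint neighbourhoods of the distinct roots of `φ p` then each catch a
different root of `φ q`. The count is also bounded by `n`, so on any nonempty open set it attains
a maximum, and near a maximising point it can neither drop nor grow.
-/

open Filter Topology Polynomial Finset

section LocallyConstant

variable {X α : Type*} [TopologicalSpace X]

theorem isOpen_setOf_eventually_eq (f : X → α) : IsOpen {p | ∀ᶠ q in 𝓝 p, f q = f p} :=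
  isOpen_iff_mem_nhds.2 fun _ hp ↦ hp.eventually_nhds.mono fun _ hq ↦
    hq.mono fun _ h ↦ h.trans (hp.self_of_nhds.trans hq.self_of_nhds.symm)

theorem dense_setOf_eventually_eq_of_eventually_le [PartialOrder α] {f : X → α}
    (hf : (Set.range f).Finite) (hle : ∀ p, ∀ᶠ q in 𝓝 p, f p ≤ f q) :
    Dense {p | ∀ᶠ q in 𝓝 p, f q = f p} := by
  refine dense_iff_inter_open.2 fun V hV hVne ↦ ?_
  obtain ⟨p, hpV, hmax⟩ :=
    (hf.subset (Set.image_subset_range f V)).exists_maximalFor' f V hVne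
  refine ⟨p, hpV, ?_⟩
  filter_upwards [hle p, hV.mem_nhds hpV] with q hpq hqV
  exact le_antisymm (hmax hqV hpq) hpq

end LocallyConstant

namespace Polynomial

theorem continuous_eval_of_continuous_coeff {R X : Type*} [Semiring R] [TopologicalSpace R]
    [IsTopologicalSemiring R] [TopologicalSpace X] {φ : X → R[X]} {n : ℕ}
    (hdeg : ∀ x, (φ x).natDegree ≤ n) (hcont : ∀ j, Continuous fun x ↦ (φ x).coeff j) (z : R) :
    Continuous fun x ↦ (φ x).eval z := by
  simp_rw [fun x ↦ eval_eq_sum_range' (Nat.lt_succ_of_le (hdeg x)) z]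
  fun_prop

theorem exists_mem_roots_norm_sub_lt_of_norm_eval_lt {K : Type*} [NormedField K] {f : K[X]}
    (hm : f.Monic) (hs : f.Splits) {a : K} {r : ℝ} (hr : 0 ≤ r)
    (h : ‖f.eval a‖ < r ^ f.natDegree) : ∃ b ∈ f.roots, ‖a - b‖ < r := by
  by_contra! hfar
  have : r ^ f.natDegree ≤ ‖f.eval a‖ := calc
    r ^ f.natDegree = (f.roots.map fun _ ↦ r).prod := by
      simp [hs.natDegree_eq_card_roots]
    _ ≤ (f.roots.map fun b ↦ ‖a - b‖).prod :=
      Multiset.prod_map_le_prod_map₀ _ _ (fun _ _ ↦ hr) hfar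
    _ = ‖f.eval a‖ := by
      rw [hs.eval_eq_prod_roots_of_monic hm, ← normHom_apply, map_multiset_prod,
        Multiset.map_map]
      rfl
  exact this.not_gt h

variable {K X : Type*} [NormedField K] [IsAlgClosed K] [TopologicalSpace X] {φ : X → K[X]} {n : ℕ}

theorem eventually_exists_mem_roots_mem (hmonic : ∀ x, (φ x).Monic)
    (hdeg : ∀ x, (φ x).natDegree = n) (hcont : ∀ j, Continuous fun x ↦ (φ x).coeff j) {p : X}
    {a : K} (ha : a ∈ (φ p).roots) {U : Set K} (hU : U ∈ 𝓝 a) :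
    ∀ᶠ q in 𝓝 p, ∃ b ∈ (φ q).roots, b ∈ U := by
  obtain ⟨r, hr, hball⟩ := Metric.mem_nhds_iff.1 hU
  have hnorm : Continuous fun q ↦ ‖(φ q).eval a‖ :=
    (continuous_eval_of_continuous_coeff (fun x ↦ (hdeg x).le) hcont a).norm
  have hp : ‖(φ p).eval a‖ < r ^ n := by
    rw [(isRoot_of_mem_roots ha).eq_zero, norm_zero]
    exact pow_pos hr n
  filter_upwards [hnorm.continuousAt.eventually_lt continuousAt_const hp] with q hq
  obtain ⟨b, hb, hab⟩ := exists_mem_roots_norm_sub_lt_of_norm_eval_lt (hmonic q)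
    (IsAlgClosed.splits _) hr.le (hdeg q ▸ hq)
  exact ⟨b, hb, hball (by rwa [Metric.mem_ball, dist_comm, dist_eq_norm])⟩

theorem eventually_card_roots_toFinset_le [DecidableEq K] (hmonic : ∀ x, (φ x).Monic)
    (hdeg : ∀ x, (φ x).natDegree = n) (hcont : ∀ j, Continuous fun x ↦ (φ x).coeff j) (p : X) :
    ∀ᶠ q in 𝓝 p, #(φ p).roots.toFinset ≤ #(φ q).roots.toFinset := by
  obtain ⟨U, hU, hdisj⟩ := (φ p).roots.toFinset.finite_toSet.t2_separation
  have hnear : ∀ᶠ q in 𝓝 p, ∀ a ∈ (φ p).roots.toFinset, ∃ b ∈ (φ q).roots, b ∈ U a :=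
    (eventually_all_finset _).2 fun a ha ↦ eventually_exists_mem_roots_mem hmonic hdeg hcont
      (Multiset.mem_toFinset.1 ha) ((hU a).2.mem_nhds (hU a).1)
  filter_upwards [hnear] with q hq
  refine card_le_card_of_forall_subsingleton (fun a b ↦ b ∈ U a) (fun a ha ↦ ?_)
    fun b _ a₁ h₁ a₂ h₂ ↦ hdisj.elim h₁.1 h₂.1 (Set.not_disjoint_iff.2 ⟨b, h₁.2, h₂.2⟩)
  obtain ⟨b, hb, hbU⟩ := hq a ha
  exact ⟨b, Multiset.mem_toFinset.2 hb, hbU⟩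

end Polynomial

/-- For a continuous family of monic complex polynomials of degree `n`, the set of points
near which the number of distinct roots is locally constant is open and dense. -/
theorem distinct_root_count_locally_constant_dense {X : Type*} [TopologicalSpace X] {n : ℕ}
    (φ : X → Polynomial ℂ)
    (hmonic : ∀ x, (φ x).Monic) (hdeg : ∀ x, (φ x).natDegree = n)
    (hcont : ∀ j, Continuous fun x => (φ x).coeff j) :
    IsOpen {p : X | ∃ U : Set X, IsOpen U ∧ p ∈ U ∧
        ∀ q ∈ U, (φ q).roots.toFinset.card = (φ p).roots.toFinset.card} ∧
      Dense {p : X | ∃ U : Set X, IsOpen U ∧ p ∈ U ∧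
        ∀ q ∈ U, (φ q).roots.toFinset.card = (φ p).roots.toFinset.card} := by
  set f : X → ℕ := fun x ↦ #(φ x).roots.toFinset
  have hset : {p : X | ∃ U : Set X, IsOpen U ∧ p ∈ U ∧ ∀ q ∈ U, f q = f p} =
      {p | ∀ᶠ q in 𝓝 p, f q = f p} := by
    ext p
    simp only [Set.mem_ofPred_eq, eventually_nhds_iff]
    tauto
  have hbdd : Set.range f ⊆ Set.Iic n := Set.range_subset_iff.2 fun x ↦
    (Multiset.toFinset_card_le _).trans ((card_roots' _).trans (hdeg x).le)
  rw [hset]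
  exact ⟨isOpen_setOf_eventually_eq f, dense_setOf_eventually_eq_of_eventually_le
    ((Set.finite_Iic n).subset hbdd) (eventually_card_roots_toFinset_le hmonic hdeg hcont)⟩
end

section
/- (Lemma 4.3.) Let A ⊆ ℝᵐ be open, B a finite-dimensional smooth manifold without boundary, H ∈ Matrix (Fin m) (Fin m) ℝ a constant nilpotent matrix, p ∈ A, K ⊆ B compact, and h : A × B → ℝ a smooth function such that dh vanishes on Ker H and dh∘H is closed along the fibers. Then there exist an open set U with p ∈ U ⊆ A, an open set V with K ⊆ V ⊆ B, and a smooth function φ : U × V → ℝ such that: (I) Hᵀ·∇_zφ(z,u) = ∇_z h(z,u) on U × V (i.e. dφ∘H = dh along the fibers); (II) φ(p,u) = 0 for every u ∈ V, and ∇_zφ(p,u) = 0 for every u ∈ V with ∇_z h(p,u) = 0. -/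
open Matrix Manifold

/-- Gradient in the `z`-variables of a function on `ℝᵐ × B`. -/
noncomputable def gradZb {m : ℕ} {B : Type*} (g : (Fin m → ℝ) × B → ℝ)
    (z : Fin m → ℝ) (u : B) : Fin m → ℝ :=
  fun i => fderiv ℝ (fun w => g (w, u)) z (Pi.single i 1)

/-!
Let `G` be a generalized inverse of `H` (`H G H = H`). Since `dh` kills `Ker H`, the covector
`dh ∘ G` evaluates to `dh v` on `H v`, and the closedness of `dh ∘ H` makes `dh ∘ G` closed along
the directions of `Im H`. Integrating it along the segments `t ↦ z + (t - 1) • H G (z - p)`, which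
run inside the leaf `z + Im H` and are constant for `z = p`, gives the Poincaré-lemma primitive
`φ(z, u) = ∫₀¹ dh_{z + (t - 1) • H G (z - p)}(G (z - p)) dt`: differentiating under the integral,
`dφ (H v)` is the integral of `d/dt (t · dh v)`, i.e. `dh v`, while `φ(p, ·) = 0` and
`dφ_p = dh_p ∘ G`. Smoothness in `(z, u)` is checked in charts of `B`.
-/

open Set Filter Topology intervalIntegral
open scoped ContDiff

theorem DifferentiableAt.hasFDerivAt_comp_prodMk_left {𝕜 E F G : Type*} [NontriviallyNormedField 𝕜]
    [NormedAddCommGroup E] [NormedSpace 𝕜 E] [NormedAddCommGroup F] [NormedSpace 𝕜 F]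
    [NormedAddCommGroup G] [NormedSpace 𝕜 G] {g : E × F → G} {x : E × F}
    (hg : DifferentiableAt 𝕜 g x) :
    HasFDerivAt (fun w => g (w, x.2)) ((fderiv 𝕜 g x).comp (ContinuousLinearMap.inl 𝕜 E F)) x.1 :=
  hg.hasFDerivAt.comp x.1 (hasFDerivAt_prodMk_left x.1 x.2)

section ParametricIntegral

theorem continuousOn_intervalIntegral_of_continuousOn {X E : Type*} [TopologicalSpace X]
    [NormedAddCommGroup E] [NormedSpace ℝ E] {W : Set X} {T : Set ℝ} {a b : ℝ} {Ψ : X × ℝ → E}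
    (hab : uIcc a b ⊆ T) (hΨ : ContinuousOn Ψ (W ×ˢ T)) :
    ContinuousOn (fun q => ∫ t in a..b, Ψ (q, t)) W := by
  have hle : min a b ≤ max a b := min_le_max
  -- clamping `t` to `[a, b]` makes the integrand continuous on all of `W × ℝ`
  set τ : ℝ → ℝ := fun t => projIcc (min a b) (max a b) hle t
  have hclamped : Continuous fun w : W => ∫ t in a..b, Ψ (w.1, τ t) :=
    continuous_parametric_intervalIntegral_of_continuous' (f := fun (w : W) t => Ψ (w.1, τ t))
      (hΨ.comp_continuous (by fun_prop) fun x => ⟨x.1.2, hab (projIcc _ _ hle x.2).2⟩) a b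
  rw [continuousOn_iff_continuous_domRestrict]
  refine hclamped.congr fun w => integral_congr fun t ht => ?_
  simp [τ, projIcc_of_mem hle ht]

theorem hasFDerivAt_intervalIntegral_of_continuousOn {P F : Type*} [NormedAddCommGroup P]
    [NormedSpace ℝ P] [FiniteDimensional ℝ P] [NormedAddCommGroup F] [NormedSpace ℝ F]
    {W : Set P} {T : Set ℝ} {a b : ℝ} {Ψ : P × ℝ → F} {Ψ' : P × ℝ → P →L[ℝ] F}
    (hW : IsOpen W) (hab : uIcc a b ⊆ T) (hΨ : ContinuousOn Ψ (W ×ˢ T))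
    (hΨ' : ContinuousOn Ψ' (W ×ˢ T))
    (hderiv : ∀ x ∈ W ×ˢ T, HasFDerivAt (fun q => Ψ (q, x.2)) (Ψ' x) x.1)
    {z : P} (hz : z ∈ W) :
    HasFDerivAt (fun q => ∫ t in a..b, Ψ (q, t)) (∫ t in a..b, Ψ' (z, t)) z := by
  have hslice : ∀ q ∈ W, ContinuousOn (fun t => Ψ (q, t)) (uIoc a b) := fun q hq =>
    ((hΨ.uncurry_left (f := fun q t => Ψ (q, t)) q hq).mono hab).mono uIoc_subset_uIcc
  have hslice' : ContinuousOn (fun t => Ψ' (z, t)) (uIoc a b) :=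
    ((hΨ'.uncurry_left (f := fun q t => Ψ' (q, t)) z hz).mono hab).mono uIoc_subset_uIcc
  obtain ⟨ε, hε, hball⟩ := Metric.nhds_basis_closedBall.mem_iff.mp (hW.mem_nhds hz)
  obtain ⟨M, hM⟩ := ((isCompact_closedBall z ε).prod isCompact_uIcc).exists_bound_of_continuousOn
    (hΨ'.mono (prod_mono hball hab))
  refine hasFDerivAt_integral_of_dominated_of_fderiv_le (F := fun q t => Ψ (q, t))
    (F' := fun q t => Ψ' (q, t)) (bound := fun _ => M) (Metric.ball_mem_nhds z hε) ?_
    (((hΨ.uncurry_left (f := fun q t => Ψ (q, t)) z hz).mono hab).intervalIntegrable)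
    (hslice'.aestronglyMeasurable measurableSet_uIoc) ?_ intervalIntegrable_const ?_
  · filter_upwards [hW.mem_nhds hz] with q hq
    exact (hslice q hq).aestronglyMeasurable measurableSet_uIoc
  · filter_upwards with t ht q hq
    exact hM (q, t) ⟨Metric.ball_subset_closedBall hq, uIoc_subset_uIcc ht⟩
  · filter_upwards with t ht q hq
    exact hderiv (q, t) ⟨hball (Metric.ball_subset_closedBall hq), hab (uIoc_subset_uIcc ht)⟩

universe u

variable {P : Type u} [NormedAddCommGroup P] [NormedSpace ℝ P] [FiniteDimensional ℝ P]
  {W : Set P} {T : Set ℝ} {a b : ℝ}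

-- `F` shares the universe of `P` because the induction passes to `P →L[ℝ] F`
theorem contDiffOn_intervalIntegral_of_contDiffOn_nat (hW : IsOpen W) (hT : IsOpen T)
    (hab : uIcc a b ⊆ T) (n : ℕ) {F : Type u} [NormedAddCommGroup F] [NormedSpace ℝ F]
    [CompleteSpace F] {Ψ : P × ℝ → F} (hΨ : ContDiffOn ℝ n Ψ (W ×ˢ T)) :
    ContDiffOn ℝ n (fun q => ∫ t in a..b, Ψ (q, t)) W := by
  induction n generalizing F with
  | zero =>
    rw [Nat.cast_zero, contDiffOn_zero] at hΨ ⊢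
    exact continuousOn_intervalIntegral_of_continuousOn hab hΨ
  | succ n ih =>
    have hWT : IsOpen (W ×ˢ T) := hW.prod hT
    have hΨ' : ContDiffOn ℝ n (fun x => (fderiv ℝ Ψ x).comp (ContinuousLinearMap.inl ℝ P ℝ))
        (W ×ˢ T) :=
      (hΨ.fderiv_of_isOpen hWT (by push_cast; rfl)).clm_comp contDiffOn_const
    have hderiv : ∀ x ∈ W ×ˢ T, HasFDerivAt (fun q => Ψ (q, x.2))
        ((fderiv ℝ Ψ x).comp (ContinuousLinearMap.inl ℝ P ℝ)) x.1 := fun x hx =>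
      ((hΨ.differentiableOn (by simp)).differentiableAt
        (hWT.mem_nhds hx)).hasFDerivAt_comp_prodMk_left
    have hint := fun z (hz : z ∈ W) => hasFDerivAt_intervalIntegral_of_continuousOn hW hab
      hΨ.continuousOn hΨ'.continuousOn hderiv hz
    rw [Nat.cast_succ, contDiffOn_succ_iff_fderiv_of_isOpen hW]
    exact ⟨fun z hz => (hint z hz).differentiableAt.differentiableWithinAt, by simp,
      (ih hΨ').congr fun z hz => (hint z hz).fderiv⟩

theorem contDiffOn_intervalIntegral_of_contDiffOn (hW : IsOpen W) (hT : IsOpen T)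
    (hab : uIcc a b ⊆ T) {F : Type u} [NormedAddCommGroup F] [NormedSpace ℝ F] [CompleteSpace F]
    {Ψ : P × ℝ → F} (hΨ : ContDiffOn ℝ ∞ Ψ (W ×ˢ T)) :
    ContDiffOn ℝ ∞ (fun q => ∫ t in a..b, Ψ (q, t)) W :=
  contDiffOn_infty.mpr fun n =>
    contDiffOn_intervalIntegral_of_contDiffOn_nat hW hT hab n (contDiffOn_infty.mp hΨ n)

end ParametricIntegral

theorem LinearMap.exists_comp_comp_eq_self {K V V' : Type*} [DivisionRing K] [AddCommGroup V]
    [Module K V] [AddCommGroup V'] [Module K V'] (f : V →ₗ[K] V') :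
    ∃ g : V' →ₗ[K] V, f ∘ₗ g ∘ₗ f = f := by
  obtain ⟨s, hs⟩ := f.rangeRestrict.exists_rightInverse_of_surjective f.range_rangeRestrict
  obtain ⟨r, hr⟩ := f.range.subtype.exists_leftInverse_of_injective f.range.ker_subtype
  refine ⟨s ∘ₗ r, LinearMap.ext fun x => ?_⟩
  have hx : r (f x) = f.rangeRestrict x := LinearMap.congr_fun hr (f.rangeRestrict x)
  simpa [hx] using congrArg Subtype.val (LinearMap.congr_fun hs (f.rangeRestrict x))

theorem ContinuousLinearMap.exists_comp_comp_eq_self {𝕜 E F : Type*} [NontriviallyNormedField 𝕜]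
    [CompleteSpace 𝕜] [NormedAddCommGroup E] [NormedSpace 𝕜 E] [NormedAddCommGroup F]
    [NormedSpace 𝕜 F] [FiniteDimensional 𝕜 F] (f : E →L[𝕜] F) :
    ∃ g : F →L[𝕜] E, f ∘L g ∘L f = f := by
  obtain ⟨g, hg⟩ := (f : E →ₗ[𝕜] F).exists_comp_comp_eq_self
  exact ⟨LinearMap.toContinuousLinearMap g, ContinuousLinearMap.coe_injective hg⟩

theorem dotProduct_apply_single {ι R : Type*} [Fintype ι] [DecidableEq ι] [CommSemiring R]
    (ℓ : (ι → R) →ₗ[R] R) (v : ι → R) : (fun i => ℓ (Pi.single i 1)) ⬝ᵥ v = ℓ v := by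
  rw [ℓ.pi_apply_eq_sum_univ v]
  simp only [dotProduct, smul_eq_mul, mul_comm]
  refine Finset.sum_congr rfl fun i _ => ?_
  congr 2
  ext j
  simp [Pi.single_apply, eq_comm]

section Coordinates

variable {m : ℕ} {B : Type*}

theorem gradZb_dotProduct (g : (Fin m → ℝ) × B → ℝ) (z : Fin m → ℝ) (u : B) (v : Fin m → ℝ) :
    gradZb g z u ⬝ᵥ v = fderiv ℝ (fun w => g (w, u)) z v :=
  dotProduct_apply_single (fderiv ℝ (fun w => g (w, u)) z : (Fin m → ℝ) →ₗ[ℝ] ℝ) v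

theorem transpose_mulVec_gradZb (H : Matrix (Fin m) (Fin m) ℝ) (g : (Fin m → ℝ) × B → ℝ)
    (z : Fin m → ℝ) (u : B) :
    Hᵀ *ᵥ gradZb g z u = fun i => fderiv ℝ (fun w => g (w, u)) z (H *ᵥ Pi.single i 1) := by
  ext i
  rw [← gradZb_dotProduct, mulVec_single_one, mulVec_transpose]
  rfl

theorem fderiv_transpose_mulVec_gradZb_dotProduct (H : Matrix (Fin m) (Fin m) ℝ)
    {g : (Fin m → ℝ) × B → ℝ} {z : Fin m → ℝ} {u : B}
    (hg : DifferentiableAt ℝ (fderiv ℝ (fun w => g (w, u))) z) (v w : Fin m → ℝ) :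
    fderiv ℝ (fun z' => Hᵀ *ᵥ gradZb g z' u) z v ⬝ᵥ w =
      fderiv ℝ (fderiv ℝ (fun w => g (w, u))) z v (H *ᵥ w) := by
  set D2 := fderiv ℝ (fderiv ℝ (fun w => g (w, u))) z
  have hpi : HasFDerivAt (fun z' => Hᵀ *ᵥ gradZb g z' u)
      (ContinuousLinearMap.pi fun i => (ContinuousLinearMap.apply ℝ ℝ (H *ᵥ Pi.single i 1)).comp D2)
      z := by
    simp_rw [transpose_mulVec_gradZb]
    exact hasFDerivAt_pi.2 fun i =>
      (ContinuousLinearMap.apply ℝ ℝ (H *ᵥ Pi.single i 1)).hasFDerivAt.comp z hg.hasFDerivAt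
  rw [hpi.fderiv]
  exact dotProduct_apply_single ((D2 v : (Fin m → ℝ) →ₗ[ℝ] ℝ) ∘ₗ H.mulVecLin) w

end Coordinates

section HomotopyPath

variable {E : Type*} [NormedAddCommGroup E] [NormedSpace ℝ E] (H G : E →L[ℝ] E) (p : E)

def homotopyPath (z : E) (t : ℝ) : E := z + (t - 1) • H (G (z - p))

noncomputable def homotopyPrimitive (f : E → ℝ) (z : E) : ℝ :=
  ∫ t in (0 : ℝ)..1, fderiv ℝ f (homotopyPath H G p z t) (G (z - p))

noncomputable def homotopyIntegrandFDeriv (f : E → ℝ) (z : E) (t : ℝ) : E →L[ℝ] ℝ :=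
  (fderiv ℝ f (homotopyPath H G p z t)).comp G +
    ((fderiv ℝ (fderiv ℝ f) (homotopyPath H G p z t)).comp
      (ContinuousLinearMap.id ℝ E + (t - 1) • H ∘L G)).flip (G (z - p))

variable {H G p}

@[simp]
theorem homotopyPath_one (z : E) : homotopyPath H G p z 1 = z := by
  simp [homotopyPath]

@[simp]
theorem homotopyPath_self (t : ℝ) : homotopyPath H G p p t = p := by
  simp [homotopyPath]

theorem continuous_homotopyPath : Continuous fun x : E × ℝ => homotopyPath H G p x.1 x.2 := by
  unfold homotopyPath
  fun_prop

theorem hasFDerivAt_homotopyPath (z : E) (t : ℝ) :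
    HasFDerivAt (homotopyPath H G p · t) (ContinuousLinearMap.id ℝ E + (t - 1) • H ∘L G) z := by
  have h := ((H ∘L G).hasFDerivAt.comp z ((hasFDerivAt_id z).sub_const p)).const_smul (t - 1)
  rw [ContinuousLinearMap.comp_id] at h
  exact (hasFDerivAt_id z).add h

theorem hasDerivAt_homotopyPath (z : E) (t : ℝ) :
    HasDerivAt (homotopyPath H G p z) (H (G (z - p))) t := by
  have h := (((hasDerivAt_id t).sub_const 1).smul_const (H (G (z - p)))).const_add z
  rwa [one_smul] at h

theorem exists_isOpen_mapsTo_homotopyPath {A : Set E} (hA : IsOpen A) (hp : p ∈ A) :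
    ∃ U : Set E, IsOpen U ∧ p ∈ U ∧ U ⊆ A ∧
      MapsTo (fun x : E × ℝ => homotopyPath H G p x.1 x.2) (U ×ˢ Ioo (-1) 2) A := by
  obtain ⟨U, T, hU, -, hpU, hT, hUT⟩ := generalized_tube_lemma (isCompact_singleton (x := p))
    (isCompact_Icc (a := (-1 : ℝ)) (b := 2))
    (hA.preimage (continuous_homotopyPath (H := H) (G := G) (p := p)))
    (by rintro ⟨z, t⟩ ⟨rfl, -⟩; simpa using hp)
  have hpath : MapsTo (fun x : E × ℝ => homotopyPath H G p x.1 x.2) (U ×ˢ Icc (-1) 2) A :=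
    fun x hx => hUT ⟨hx.1, hT hx.2⟩
  refine ⟨U, hU, singleton_subset_iff.mp hpU, fun z hz => ?_,
    hpath.mono_left (prod_mono subset_rfl Ioo_subset_Icc_self)⟩
  simpa using hpath (mk_mem_prod hz (⟨by norm_num, by norm_num⟩ : (1 : ℝ) ∈ Icc (-1) 2))

theorem uIcc_zero_one_subset_Ioo : uIcc (0 : ℝ) 1 ⊆ Ioo (-1) 2 := by
  rw [uIcc_of_le zero_le_one]
  exact Icc_subset_Ioo (by norm_num) (by norm_num)

end HomotopyPath

section HomotopyPrimitive

variable {E : Type*} [NormedAddCommGroup E] [NormedSpace ℝ E] {H G : E →L[ℝ] E} {p : E}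
  {f : E → ℝ} {A U : Set E}

theorem hasFDerivAt_homotopyIntegrand {z : E} {t : ℝ}
    (hf : DifferentiableAt ℝ (fderiv ℝ f) (homotopyPath H G p z t)) :
    HasFDerivAt (fun ζ => fderiv ℝ f (homotopyPath H G p ζ t) (G (ζ - p)))
      (homotopyIntegrandFDeriv H G p f z t) z := by
  have hG : HasFDerivAt (fun ζ => G (ζ - p)) G z := by
    have h := G.hasFDerivAt.comp z ((hasFDerivAt_id z).sub_const p)
    rwa [ContinuousLinearMap.comp_id] at h
  exact (hf.hasFDerivAt.comp z (hasFDerivAt_homotopyPath z t)).clm_apply hG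

theorem hasDerivAt_mul_fderiv_homotopyPath {z : E} {t : ℝ} (hHGH : ∀ v, H (G (H v)) = H v)
    (hf : DifferentiableAt ℝ (fderiv ℝ f) (homotopyPath H G p z t))
    (hsymm : IsSymmSndFDerivAt ℝ f (homotopyPath H G p z t))
    (hker : ∀ v, H v = 0 → fderiv ℝ f (homotopyPath H G p z t) v = 0)
    (hclosed : ∀ v w, fderiv ℝ (fderiv ℝ f) (homotopyPath H G p z t) v (H w) =
      fderiv ℝ (fderiv ℝ f) (homotopyPath H G p z t) w (H v)) (v : E) :
    HasDerivAt (fun s => s * fderiv ℝ f (homotopyPath H G p z s) v)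
      (homotopyIntegrandFDeriv H G p f z t (H v)) t := by
  set x := homotopyPath H G p z t
  set D2 := fderiv ℝ (fderiv ℝ f) x
  have hderiv : HasDerivAt (fun s => fderiv ℝ f (homotopyPath H G p z s) v)
      (D2 (H (G (z - p))) v) t :=
    (ContinuousLinearMap.apply ℝ ℝ v).hasFDerivAt.comp_hasDerivAt t
      (hf.hasFDerivAt.comp_hasDerivAt t (hasDerivAt_homotopyPath z t))
  have hGH : fderiv ℝ f x (G (H v)) = fderiv ℝ f x v := by
    have := hker (G (H v) - v) (by simp [hHGH])
    rwa [map_sub, sub_eq_zero] at this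
  have hswap : D2 (H v) (G (z - p)) = D2 (H (G (z - p))) v := by
    rw [hsymm, hclosed, hsymm]
  have hB : (ContinuousLinearMap.id ℝ E + (t - 1) • H ∘L G) (H v) = t • H v := by
    simp only [_root_.add_apply, _root_.smul_apply,
      ContinuousLinearMap.comp_apply, ContinuousLinearMap.id_apply, hHGH]
    module
  refine ((hasDerivAt_id' t).mul hderiv).congr_deriv ?_
  rw [homotopyIntegrandFDeriv, _root_.add_apply, ContinuousLinearMap.comp_apply,
    ContinuousLinearMap.flip_apply, ContinuousLinearMap.comp_apply, hB, map_smul,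
    _root_.smul_apply, hGH, hswap, smul_eq_mul, one_mul]

theorem continuousOn_homotopyIntegrandFDeriv (hA : IsOpen A) (hf : ContDiffOn ℝ 2 f A)
    (hpath : MapsTo (fun x : E × ℝ => homotopyPath H G p x.1 x.2) (U ×ˢ Ioo (-1) 2) A) :
    ContinuousOn (fun x : E × ℝ => homotopyIntegrandFDeriv H G p f x.1 x.2)
      (U ×ˢ Ioo (-1) 2) := by
  have hDf := (hf.continuousOn_fderiv_of_isOpen hA (by norm_num)).comp
    continuous_homotopyPath.continuousOn hpath
  have hD2f := ((hf.fderiv_of_isOpen hA (m := 1) (by norm_num)).continuousOn_fderiv_of_isOpen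
    hA le_rfl).comp continuous_homotopyPath.continuousOn hpath
  refine (hDf.clm_comp continuousOn_const).add (ContinuousOn.clm_apply ?_ (by fun_prop))
  exact (ContinuousLinearMap.flipₗᵢ ℝ E E ℝ).continuous.comp_continuousOn
    (hD2f.clm_comp (by fun_prop))

theorem hasFDerivAt_homotopyPrimitive [FiniteDimensional ℝ E] (hA : IsOpen A)
    (hf : ContDiffOn ℝ 2 f A) (hU : IsOpen U)
    (hpath : MapsTo (fun x : E × ℝ => homotopyPath H G p x.1 x.2) (U ×ˢ Ioo (-1) 2) A)
    {z : E} (hz : z ∈ U) :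
    HasFDerivAt (homotopyPrimitive H G p f)
      (∫ t in (0 : ℝ)..1, homotopyIntegrandFDeriv H G p f z t) z := by
  have hDf : ContDiffOn ℝ 1 (fderiv ℝ f) A := hf.fderiv_of_isOpen hA (by norm_num)
  have hΨ : ContinuousOn (fun x : E × ℝ => fderiv ℝ f (homotopyPath H G p x.1 x.2) (G (x.1 - p)))
      (U ×ˢ Ioo (-1) 2) :=
    (hDf.continuousOn.comp continuous_homotopyPath.continuousOn hpath).clm_apply (by fun_prop)
  refine hasFDerivAt_intervalIntegral_of_continuousOn hU uIcc_zero_one_subset_Ioo hΨ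
    (continuousOn_homotopyIntegrandFDeriv hA hf hpath) (fun x hx => ?_) hz
  exact hasFDerivAt_homotopyIntegrand
      ((hDf.differentiableOn one_ne_zero).differentiableAt (hA.mem_nhds (hpath hx)))

theorem fderiv_homotopyPrimitive_map [FiniteDimensional ℝ E] (hA : IsOpen A)
    (hf : ContDiffOn ℝ 2 f A) (hHGH : ∀ v, H (G (H v)) = H v)
    (hker : ∀ x ∈ A, ∀ v, H v = 0 → fderiv ℝ f x v = 0)
    (hclosed : ∀ x ∈ A, ∀ v w,
      fderiv ℝ (fderiv ℝ f) x v (H w) = fderiv ℝ (fderiv ℝ f) x w (H v))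
    (hU : IsOpen U)
    (hpath : MapsTo (fun x : E × ℝ => homotopyPath H G p x.1 x.2) (U ×ˢ Ioo (-1) 2) A)
    {z : E} (hz : z ∈ U) (v : E) :
    fderiv ℝ (homotopyPrimitive H G p f) z (H v) = fderiv ℝ f z v := by
  have hcont : ContinuousOn (homotopyIntegrandFDeriv H G p f z) (uIcc 0 1) :=
    ((continuousOn_homotopyIntegrandFDeriv hA hf hpath).uncurry_left
      (f := homotopyIntegrandFDeriv H G p f) z hz).mono uIcc_zero_one_subset_Ioo
  have hderiv : ∀ t ∈ uIcc (0 : ℝ) 1, HasDerivAt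
      (fun s => s * fderiv ℝ f (homotopyPath H G p z s) v)
      (homotopyIntegrandFDeriv H G p f z t (H v)) t := by
    intro t ht
    have hx : homotopyPath H G p z t ∈ A := hpath (mk_mem_prod hz (uIcc_zero_one_subset_Ioo ht))
    have hfx := hf.contDiffAt (hA.mem_nhds hx)
    exact hasDerivAt_mul_fderiv_homotopyPath hHGH
      ((hfx.fderiv_right (m := 1) le_rfl).differentiableAt one_ne_zero)
      (hfx.isSymmSndFDerivAt (by simp)) (hker _ hx) (hclosed _ hx) v
  rw [(hasFDerivAt_homotopyPrimitive hA hf hU hpath hz).fderiv,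
    ContinuousLinearMap.intervalIntegral_apply hcont.intervalIntegrable,
    integral_eq_sub_of_hasDerivAt hderiv (hcont.clm_apply continuousOn_const).intervalIntegrable]
  simp

theorem fderiv_homotopyPrimitive_self [FiniteDimensional ℝ E] (hA : IsOpen A)
    (hf : ContDiffOn ℝ 2 f A) (hU : IsOpen U)
    (hpath : MapsTo (fun x : E × ℝ => homotopyPath H G p x.1 x.2) (U ×ˢ Ioo (-1) 2) A)
    (hp : p ∈ U) :
    fderiv ℝ (homotopyPrimitive H G p f) p = (fderiv ℝ f p).comp G := by
  rw [(hasFDerivAt_homotopyPrimitive hA hf hU hpath hp).fderiv]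
  simp [homotopyIntegrandFDeriv]

end HomotopyPrimitive

section Smoothness

variable {E Y : Type} [NormedAddCommGroup E] [NormedSpace ℝ E] [FiniteDimensional ℝ E]
  [NormedAddCommGroup Y] [NormedSpace ℝ Y] [FiniteDimensional ℝ Y]
  {H G : E →L[ℝ] E} {p : E} {A U : Set E}

theorem contDiffOn_homotopyPrimitive_param {S : Set Y} (hA : IsOpen A) (hS : IsOpen S)
    {g : E × Y → ℝ} (hg : ContDiffOn ℝ ∞ g (A ×ˢ S)) (hU : IsOpen U)
    (hpath : MapsTo (fun x : E × ℝ => homotopyPath H G p x.1 x.2) (U ×ˢ Ioo (-1) 2) A) :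
    ContDiffOn ℝ ∞ (fun x : E × Y => homotopyPrimitive H G p (fun w => g (w, x.2)) x.1)
      (U ×ˢ S) := by
  have hAS : IsOpen (A ×ˢ S) := hA.prod hS
  set Dg : E × Y → E →L[ℝ] ℝ := fun x => (fderiv ℝ g x).comp (ContinuousLinearMap.inl ℝ E Y)
  have hDg : ContDiffOn ℝ ∞ Dg (A ×ˢ S) :=
    (hg.fderiv_of_isOpen hAS (by simp)).clm_comp contDiffOn_const
  have hDg_eq : ∀ x ∈ A ×ˢ S, fderiv ℝ (fun w => g (w, x.2)) x.1 = Dg x := fun x hx =>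
    ((hg.differentiableOn (by simp)).differentiableAt
      (hAS.mem_nhds hx)).hasFDerivAt_comp_prodMk_left.fderiv
  have hmaps : MapsTo (fun x : (E × Y) × ℝ => (homotopyPath H G p x.1.1 x.2, x.1.2))
      ((U ×ˢ S) ×ˢ Ioo (-1) 2) (A ×ˢ S) :=
    fun x hx => ⟨hpath (mk_mem_prod hx.1.1 hx.2), hx.1.2⟩
  have hΨ : ContDiffOn ℝ ∞
      (fun x : (E × Y) × ℝ => Dg (homotopyPath H G p x.1.1 x.2, x.1.2) (G (x.1.1 - p)))
      ((U ×ˢ S) ×ˢ Ioo (-1) 2) :=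
    (hDg.comp (by unfold homotopyPath; fun_prop) hmaps).clm_apply (by fun_prop)
  refine (contDiffOn_intervalIntegral_of_contDiffOn (hU.prod hS) isOpen_Ioo
    uIcc_zero_one_subset_Ioo hΨ).congr fun x hx => integral_congr fun t ht => ?_
  exact congrArg (· (G (x.1 - p)))
    (hDg_eq _ (hmaps (mk_mem_prod hx (uIcc_zero_one_subset_Ioo ht))))

theorem contMDiffOn_homotopyPrimitive {B : Type*} [TopologicalSpace B] [ChartedSpace Y B]
    [IsManifold 𝓘(ℝ, Y) ∞ B] (hA : IsOpen A) {h : E × B → ℝ}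
    (hh : ContMDiffOn (𝓘(ℝ, E).prod 𝓘(ℝ, Y)) 𝓘(ℝ) ∞ h (A ×ˢ univ)) (hU : IsOpen U)
    (hpath : MapsTo (fun x : E × ℝ => homotopyPath H G p x.1 x.2) (U ×ˢ Ioo (-1) 2) A) :
    ContMDiffOn (𝓘(ℝ, E).prod 𝓘(ℝ, Y)) 𝓘(ℝ) ∞
      (fun x : E × B => homotopyPrimitive H G p (fun w => h (w, x.2)) x.1) (U ×ˢ univ) := by
  rintro ⟨z₀, u₀⟩ ⟨hz₀, -⟩
  set e := extChartAt 𝓘(ℝ, Y) u₀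
  set g : E × Y → ℝ := fun x => h (x.1, e.symm x.2)
  have hg : ContDiffOn ℝ ∞ g (A ×ˢ e.target) := by
    have hg' : ContMDiffOn (𝓘(ℝ, E).prod 𝓘(ℝ, Y)) 𝓘(ℝ) ∞ g (A ×ˢ e.target) :=
      hh.comp (contMDiffOn_fst.prodMk ((contMDiffOn_extChartAt_symm u₀).comp contMDiffOn_snd
        fun x hx => hx.2)) fun x hx => ⟨hx.1, mem_univ _⟩
    rw [← modelWithCornersSelf_prod, chartedSpaceSelf_prod] at hg'
    exact hg'.contDiffOn
  have hφg : ContMDiffAt (𝓘(ℝ, E).prod 𝓘(ℝ, Y)) 𝓘(ℝ) ∞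
      (fun x : E × Y => homotopyPrimitive H G p (fun w => g (w, x.2)) x.1) (z₀, e u₀) := by
    rw [← modelWithCornersSelf_prod, chartedSpaceSelf_prod]
    exact ((contDiffOn_homotopyPrimitive_param hA (isOpen_extChartAt_target u₀) hg hU
      hpath).contDiffAt ((hU.prod (isOpen_extChartAt_target u₀)).mem_nhds
        ⟨hz₀, mem_extChartAt_target u₀⟩)).contMDiffAt
  have hchart : ContMDiffAt (𝓘(ℝ, E).prod 𝓘(ℝ, Y)) (𝓘(ℝ, E).prod 𝓘(ℝ, Y)) ∞
      (fun x : E × B => (x.1, e x.2)) (z₀, u₀) :=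
    contMDiffAt_fst.prodMk ((contMDiffAt_extChartAt (x := u₀)).comp (z₀, u₀) contMDiffAt_snd)
  refine ((hφg.comp (z₀, u₀) hchart).congr_of_eventuallyEq ?_).contMDiffWithinAt
  filter_upwards [continuous_snd.continuousAt.preimage_mem_nhds
    (extChartAt_source_mem_nhds (I := 𝓘(ℝ, Y)) u₀)] with x hx
  simp only [Function.comp_apply, g, e.left_inv hx]

end Smoothness

theorem lemma_4_3_general {m q : ℕ} {B : Type*} [TopologicalSpace B]
    [ChartedSpace (Fin q → ℝ) B]
    [IsManifold (modelWithCornersSelf ℝ (Fin q → ℝ)) (⊤ : ℕ∞) B]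
    (A : Set (Fin m → ℝ)) (hA : IsOpen A)
    (H : Matrix (Fin m) (Fin m) ℝ)
    (p : Fin m → ℝ) (hp : p ∈ A) (K : Set B)
    (h : (Fin m → ℝ) × B → ℝ)
    (hh : ContMDiffOn
      ((modelWithCornersSelf ℝ (Fin m → ℝ)).prod (modelWithCornersSelf ℝ (Fin q → ℝ)))
      (modelWithCornersSelf ℝ ℝ) (⊤ : ℕ∞) h (A ×ˢ (Set.univ : Set B)))
    (hker : ∀ z ∈ A, ∀ u : B, ∀ v : Fin m → ℝ,
      H.mulVec v = 0 → gradZb h z u ⬝ᵥ v = 0)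
    (hclosed : ∀ z ∈ A, ∀ u : B, ∀ v w : Fin m → ℝ,
      (fderiv ℝ (fun z' => Hᵀ.mulVec (gradZb h z' u)) z v) ⬝ᵥ w
        = (fderiv ℝ (fun z' => Hᵀ.mulVec (gradZb h z' u)) z w) ⬝ᵥ v) :
    ∃ U : Set (Fin m → ℝ), IsOpen U ∧ p ∈ U ∧ U ⊆ A ∧
      ∃ V : Set B, IsOpen V ∧ K ⊆ V ∧
        ∃ φ : (Fin m → ℝ) × B → ℝ,
          ContMDiffOn
            ((modelWithCornersSelf ℝ (Fin m → ℝ)).prod (modelWithCornersSelf ℝ (Fin q → ℝ)))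
            (modelWithCornersSelf ℝ ℝ) (⊤ : ℕ∞) φ (U ×ˢ V) ∧
          (∀ z ∈ U, ∀ u ∈ V, Hᵀ.mulVec (gradZb φ z u) = gradZb h z u) ∧
          (∀ u ∈ V, φ (p, u) = 0) ∧
          (∀ u ∈ V, gradZb h p u = 0 → gradZb φ p u = 0) := by
  set Hc : (Fin m → ℝ) →L[ℝ] (Fin m → ℝ) := LinearMap.toContinuousLinearMap H.mulVecLin
  obtain ⟨G, hG⟩ := Hc.exists_comp_comp_eq_self
  have hHGH (v : Fin m → ℝ) : Hc (G (Hc v)) = Hc v := congr($hG v)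
  obtain ⟨U, hU, hpU, hUA, hpath⟩ := exists_isOpen_mapsTo_homotopyPath (H := Hc) (G := G) hA hp
  have hslice (u : B) : ContDiffOn ℝ 2 (fun w => h (w, u)) A :=
    ((hh.comp (contMDiffOn_id.prodMk contMDiffOn_const) fun w hw => ⟨hw, mem_univ u⟩)
      |>.contDiffOn).of_le (WithTop.coe_le_coe.mpr le_top)
  have hker' (u : B) : ∀ x ∈ A, ∀ v, Hc v = 0 → fderiv ℝ (fun w => h (w, u)) x v = 0 :=
    fun x hx v hv => gradZb_dotProduct h x u v ▸ hker x hx u v hv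
  have hclosed' (u : B) : ∀ x ∈ A, ∀ v w, fderiv ℝ (fderiv ℝ (fun w => h (w, u))) x v (Hc w) =
      fderiv ℝ (fderiv ℝ (fun w => h (w, u))) x w (Hc v) := by
    intro x hx v w
    have hD := ((hslice u).contDiffAt (hA.mem_nhds hx)).fderiv_right (m := 1) le_rfl
    have := hclosed x hx u v w
    rwa [fderiv_transpose_mulVec_gradZb_dotProduct H (hD.differentiableAt one_ne_zero),
      fderiv_transpose_mulVec_gradZb_dotProduct H (hD.differentiableAt one_ne_zero)] at this
  refine ⟨U, hU, hpU, hUA, univ, isOpen_univ, subset_univ K,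
    fun x => homotopyPrimitive Hc G p (fun w => h (w, x.2)) x.1,
    contMDiffOn_homotopyPrimitive hA hh hU hpath, ?_, ?_, ?_⟩
  · intro z hz u _
    ext i
    rw [transpose_mulVec_gradZb]
    exact fderiv_homotopyPrimitive_map hA (hslice u) hHGH (hker' u) (hclosed' u) hU hpath hz _
  · intro u _
    simp [homotopyPrimitive]
  · intro u _ hgrad
    ext i
    rw [gradZb, fderiv_homotopyPrimitive_self hA (hslice u) hU hpath hpU,
      ContinuousLinearMap.comp_apply, ← gradZb_dotProduct, hgrad, zero_dotProduct, Pi.zero_apply]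

/-- Lemma 4.3: with `H` a constant nilpotent matrix and `h` smooth with `dh(Ker H) = 0` and
`d(dh∘H) = 0` along the fibers, near `{p} × K` there is a smooth `φ` with `dφ∘H = dh` along
the fibers, `φ(p,·) = 0`, and `dφ(p,u) = 0` whenever `dh(p,u) = 0`. -/
theorem lemma_4_3 {m q : ℕ} {B : Type*} [TopologicalSpace B]
    [ChartedSpace (Fin q → ℝ) B]
    [IsManifold (modelWithCornersSelf ℝ (Fin q → ℝ)) (⊤ : ℕ∞) B]
    (A : Set (Fin m → ℝ)) (hA : IsOpen A)
    (H : Matrix (Fin m) (Fin m) ℝ) (hnil : IsNilpotent H)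
    (p : Fin m → ℝ) (hp : p ∈ A) (K : Set B) (hK : IsCompact K)
    (h : (Fin m → ℝ) × B → ℝ)
    (hh : ContMDiffOn
      ((modelWithCornersSelf ℝ (Fin m → ℝ)).prod (modelWithCornersSelf ℝ (Fin q → ℝ)))
      (modelWithCornersSelf ℝ ℝ) (⊤ : ℕ∞) h (A ×ˢ (Set.univ : Set B)))
    (hker : ∀ z ∈ A, ∀ u : B, ∀ v : Fin m → ℝ,
      H.mulVec v = 0 → gradZb h z u ⬝ᵥ v = 0)
    (hclosed : ∀ z ∈ A, ∀ u : B, ∀ v w : Fin m → ℝ,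
      (fderiv ℝ (fun z' => Hᵀ.mulVec (gradZb h z' u)) z v) ⬝ᵥ w
        = (fderiv ℝ (fun z' => Hᵀ.mulVec (gradZb h z' u)) z w) ⬝ᵥ v) :
    ∃ U : Set (Fin m → ℝ), IsOpen U ∧ p ∈ U ∧ U ⊆ A ∧
      ∃ V : Set B, IsOpen V ∧ K ⊆ V ∧
        ∃ φ : (Fin m → ℝ) × B → ℝ,
          ContMDiffOn
            ((modelWithCornersSelf ℝ (Fin m → ℝ)).prod (modelWithCornersSelf ℝ (Fin q → ℝ)))
            (modelWithCornersSelf ℝ ℝ) (⊤ : ℕ∞) φ (U ×ˢ V) ∧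
          (∀ z ∈ U, ∀ u ∈ V, Hᵀ.mulVec (gradZb φ z u) = gradZb h z u) ∧
          (∀ u ∈ V, φ (p, u) = 0) ∧
          (∀ u ∈ V, gradZb h p u = 0 → gradZb φ p u = 0) :=
  lemma_4_3_general A hA H p hp K h hh hker hclosed
end

section
/- (Construction of the complex structure, proof of Theorem 5.1.) Let m ≥ 1, f, g ∈ ℝ with f² < 4g, and let A be an endomorphism of a 2m-dimensional real vector space (equivalently A ∈ Matrix (Fin (2m)) (Fin (2m)) ℝ) whose characteristic polynomial equals (X² + f·X + g)^m. Put H₀ = (4g − f²)^{−1/2}·(2A + f·1). Then: (a) (H₀² + 1)^m = 0; (b) for every decomposition H₀ = H + N₀ with H semisimple, N₀ nilpotent and H·N₀ = N₀·H (the Jordan–Chevalley decomposition of H₀), one has H² = −1 and (A + (1/2)·(f·1 − (4g − f²)^{1/2}·H))^m = 0. -/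
open Polynomial

/-! Completing the square gives `H₀² + 1 = 4 (4g - f²)⁻¹ (A² + fA + g)`, so `(H₀² + 1)^m = 0` is
Cayley–Hamilton. As `N₀` is nilpotent and commutes with `H`, `H² + 1` differs from `H₀² + 1` by the
nilpotent `(2H + N₀) N₀`; so `H² + 1` is nilpotent, and it is semisimple as a polynomial in `H`,
hence zero. Then `H₀² + 1 = (2H + N₀) N₀` with `2H + N₀` invertible, so `N₀^m = 0`, and
`A + (f - √(4g - f²) H) / 2 = (√(4g - f²) / 2) N₀`. -/

section Ring

variable {R : Type*} [Ring R] {a n : R}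

theorem Commute.two_mul_add_left (h : Commute a n) : Commute (2 * a + n) n :=
  ((Commute.ofNat_left 2 n).mul_left h).add_left (.refl n)

theorem Commute.isNilpotent_sq_add_one_of_add (h : Commute a n) (hn : IsNilpotent n)
    (han : IsNilpotent ((a + n) ^ 2 + 1)) : IsNilpotent (a ^ 2 + 1) := by
  have hdiff : a ^ 2 + 1 = ((a + n) ^ 2 + 1) - (2 * a + n) * n := by
    rw [h.add_sq]; noncomm_ring
  have hcomm : Commute ((a + n) ^ 2 + 1) ((2 * a + n) * n) := by
    have ha : Commute a (2 * a + n) := ((Commute.ofNat_right a 2).mul_right (.refl a)).add_right h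
    have han : Commute (a + n) (2 * a + n) := ha.add_left h.two_mul_add_left.symm
    exact ((han.mul_right (h.add_left (.refl n))).pow_left 2).add_left (.one_left _)
  rw [hdiff]
  exact hcomm.isNilpotent_sub han (h.two_mul_add_left.isNilpotent_mul_left hn)

theorem Commute.pow_eq_zero_of_sq_eq_neg_one (h2 : IsUnit (2 : R)) (h : Commute a n)
    (hn : IsNilpotent n) (ha : a ^ 2 = -1) {m : ℕ} (hm : ((a + n) ^ 2 + 1) ^ m = 0) :
    n ^ m = 0 := by
  have hfactor : (a + n) ^ 2 + 1 = (2 * a + n) * n := by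
    rw [h.add_sq, ha]; noncomm_ring
  have hunit : IsUnit (2 * a + n) := by
    have ha4 : a ^ 4 = 1 := by rw [show 4 = 2 * 2 from rfl, pow_mul, ha, neg_one_sq]
    exact hn.isUnit_add_left_of_commute (h2.mul (.of_pow_eq_one ha4 four_ne_zero))
      ((Commute.ofNat_left 2 n).mul_left h).symm
  rw [hfactor, h.two_mul_add_left.mul_pow] at hm
  exact (hunit.pow m).mul_right_eq_zero.mp hm

end Ring

section Algebra

variable {K R : Type*} [Field K] [Ring R] [Algebra K R]

theorem inv_smul_sq_add_one_eq (A : R) {f g c : K} (hc : c ^ 2 = 4 * g - f ^ 2) (hc0 : c ≠ 0) :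
    (c⁻¹ • ((2 : K) • A + f • 1)) ^ 2 + 1 = (4 / c ^ 2) • (A ^ 2 + f • A + g • 1) := by
  have hsq : ((2 : K) • A + f • 1) ^ 2 = (4 : K) • A ^ 2 + (4 * f) • A + f ^ 2 • (1 : R) := by
    rw [sq, sq]
    simp only [add_mul, mul_add, mul_one, one_mul, smul_mul_assoc, mul_smul_comm]
    module
  rw [_root_.smul_pow, hsq]
  match_scalars <;> field_simp
  linear_combination hc

theorem add_inv_two_smul_sub_eq_smul {A H N : R} {f c : K} (h2 : (2 : K) ≠ 0) (hc0 : c ≠ 0)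
    (h : c⁻¹ • ((2 : K) • A + f • 1) = H + N) :
    A + (2⁻¹ : K) • (f • 1 - c • H) = (2⁻¹ * c) • N := by
  have h' : (2 : K) • A + f • 1 = c • H + c • N := by
    rw [← smul_add, ← h, smul_inv_smul₀ hc0]
  linear_combination (norm := match_scalars <;> field_simp <;> ring) (2⁻¹ : K) • h'

end Algebra

theorem Module.End.IsSemisimple.aeval_eq_zero_of_isNilpotent {K M : Type*} [Field K]
    [PerfectField K] [AddCommGroup M] [Module K M] [FiniteDimensional K M] {f : Module.End K M}
    (hf : f.IsSemisimple) {p : K[X]} (hp : IsNilpotent (aeval f p)) : aeval f p = 0 :=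
  eq_zero_of_isNilpotent_isSemisimple hp (hf.aeval p)

namespace Matrix

variable {K n : Type*} [Field K] [Fintype n] [DecidableEq n]

theorem isSemisimple_toLinAlgEquiv'_iff {H : Matrix n n K} :
    Module.End.IsSemisimple (toLinAlgEquiv' H) ↔
      ∀ p : Submodule K (n → K), (∀ x ∈ p, H *ᵥ x ∈ p) →
        ∃ p' : Submodule K (n → K), (∀ x ∈ p', H *ᵥ x ∈ p') ∧ IsCompl p p' := by
  simp [Module.End.isSemisimple_iff, Module.End.mem_invtSubmodule_iff_forall_mem_of_mem,
    toLinAlgEquiv'_apply]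

theorem aeval_eq_zero_of_isSemisimple_of_isNilpotent [PerfectField K] {H : Matrix n n K}
    (hH : Module.End.IsSemisimple (toLinAlgEquiv' H)) {p : K[X]}
    (hp : IsNilpotent (aeval H p)) : aeval H p = 0 := by
  apply toLinAlgEquiv'.injective
  rw [← aeval_algHom_apply, map_zero]
  exact hH.aeval_eq_zero_of_isNilpotent (by rw [aeval_algHom_apply]; exact hp.map _)

end Matrix

theorem thm_5_1_complex_structure_general {m : ℕ} (f g : ℝ) (hfg : f ^ 2 < 4 * g)
    (A : Matrix (Fin (2 * m)) (Fin (2 * m)) ℝ)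
    (hchar : A.charpoly = ((X : ℝ[X]) ^ 2 + C f * X + C g) ^ m) :
    ((((Real.sqrt (4 * g - f ^ 2))⁻¹ • ((2 : ℝ) • A + f • 1)) ^ 2 + 1) ^ m = 0 ∧
      ∀ H N₀ : Matrix (Fin (2 * m)) (Fin (2 * m)) ℝ,
        (Real.sqrt (4 * g - f ^ 2))⁻¹ • ((2 : ℝ) • A + f • 1) = H + N₀ →
        (∀ p : Submodule ℝ (Fin (2 * m) → ℝ), (∀ x ∈ p, H.mulVec x ∈ p) →
          ∃ p' : Submodule ℝ (Fin (2 * m) → ℝ),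
            (∀ x ∈ p', H.mulVec x ∈ p') ∧ IsCompl p p') →
        IsNilpotent N₀ → H * N₀ = N₀ * H →
        H ^ 2 = -1 ∧
          (A + (2⁻¹ : ℝ) • (f • 1 - Real.sqrt (4 * g - f ^ 2) • H)) ^ m = 0) := by
  have hd : 0 < 4 * g - f ^ 2 := by linarith
  set c := Real.sqrt (4 * g - f ^ 2)
  have hc : c ^ 2 = 4 * g - f ^ 2 := Real.sq_sqrt hd.le
  have hc0 : c ≠ 0 := (Real.sqrt_pos.mpr hd).ne'
  have hA : (A ^ 2 + f • A + g • 1) ^ m = 0 := by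
    have h := A.aeval_self_charpoly
    rw [hchar] at h
    simpa [Algebra.algebraMap_eq_smul_one] using h
  have ha : ((c⁻¹ • ((2 : ℝ) • A + f • 1)) ^ 2 + 1) ^ m = 0 := by
    rw [inv_smul_sq_add_one_eq A hc hc0, _root_.smul_pow, hA, smul_zero]
  refine ⟨ha, fun H N₀ hHN hss hN hcomm ↦ ?_⟩
  rw [hHN] at ha
  have hH : H ^ 2 = -1 := by
    have h := Matrix.aeval_eq_zero_of_isSemisimple_of_isNilpotent
      (Matrix.isSemisimple_toLinAlgEquiv'_iff.mpr hss) (p := X ^ 2 + 1)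
      (by simpa using Commute.isNilpotent_sq_add_one_of_add hcomm hN ⟨m, ha⟩)
    simpa [add_eq_zero_iff_eq_neg] using h
  have h2 : IsUnit (2 : Matrix (Fin (2 * m)) (Fin (2 * m)) ℝ) := by
    have h := (IsUnit.mk0 (2 : ℝ) two_ne_zero).map
      (algebraMap ℝ (Matrix (Fin (2 * m)) (Fin (2 * m)) ℝ))
    rwa [map_ofNat] at h
  refine ⟨hH, ?_⟩
  rw [add_inv_two_smul_sub_eq_smul two_ne_zero hc0 hHN, _root_.smul_pow,
    Commute.pow_eq_zero_of_sq_eq_neg_one h2 hcomm hN hH ha, smul_zero]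

/-- Construction of the complex structure in the proof of Theorem 5.1: if the characteristic
polynomial of `A` is `(X² + fX + g)^m` with `f² < 4g`, and `H₀ = (4g−f²)^{−1/2}(2A + f·1)`,
then `(H₀² + 1)^m = 0`, and for any Jordan–Chevalley decomposition `H₀ = H + N₀` (with `H`
semisimple, `N₀` nilpotent, commuting) one has `H² = −1` and
`(A + (1/2)(f·1 − (4g−f²)^{1/2}·H))^m = 0`. -/
theorem thm_5_1_complex_structure {m : ℕ} (hm : 1 ≤ m) (f g : ℝ) (hfg : f ^ 2 < 4 * g)
    (A : Matrix (Fin (2 * m)) (Fin (2 * m)) ℝ)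
    (hchar : A.charpoly = ((X : ℝ[X]) ^ 2 + C f * X + C g) ^ m) :
    ((((Real.sqrt (4 * g - f ^ 2))⁻¹ • ((2 : ℝ) • A + f • 1)) ^ 2 + 1) ^ m = 0 ∧
      ∀ H N₀ : Matrix (Fin (2 * m)) (Fin (2 * m)) ℝ,
        (Real.sqrt (4 * g - f ^ 2))⁻¹ • ((2 : ℝ) • A + f • 1) = H + N₀ →
        (∀ p : Submodule ℝ (Fin (2 * m) → ℝ), (∀ x ∈ p, H.mulVec x ∈ p) →
          ∃ p' : Submodule ℝ (Fin (2 * m) → ℝ),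
            (∀ x ∈ p', H.mulVec x ∈ p') ∧ IsCompl p p') →
        IsNilpotent N₀ → H * N₀ = N₀ * H →
        H ^ 2 = -1 ∧
          (A + (2⁻¹ : ℝ) • (f • 1 - Real.sqrt (4 * g - f ^ 2) • H)) ^ m = 0) :=
  thm_5_1_complex_structure_general f g hfg A hchar
end

section
/- (Lemma 8.2, local coordinate form.) Let U ⊆ ℝⁿ × ℝᵐ be open (points (x,y)), a₁,…,a_n ∈ ℝ∖{0}, V ⊆ ℝᵐ an open set containing the y-projection of U, H : V → Matrix (Fin m) (Fin m) ℝ a C^∞ matrix field depending only on y, and X₁,…,X_n : U → ℝᵐ C^∞ maps. Define G″ : U → Matrix (Fin (n+m)) (Fin (n+m)) ℝ by G″(x,y)(ξ,η) = ((a_j·ξ_j)_{j=1,…,n}, H(y)·η + Σ_{j=1}^{n} ξ_j·X_j(x,y)) (i.e. G″ = J + H + Σ_j X_j ⊗ dx_j with J = Σ_j a_j (∂/∂x_j)⊗dx_j). If the Nijenhuis torsion of G″ vanishes on U, then for every j = 1,…,n, every (x,y) ∈ U and every v ∈ ℝᵐ: (DH(y)(X_j(x,y)))·v − D_yX_j(x,y)·(H(y)·v)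 + H(y)·(D_yX_j(x,y)·v) = 0, where D_yX_j denotes the partial derivative of X_j in the y-variables; that is, the Lie derivative L_{X_j}H vanishes on the fibers x = const. -/
open Matrix

/-- Nijenhuis torsion of a (1,1)-tensor field on a Euclidean space, given by its action
`A x : E → E` (pointwise linear by construction):
`N(x)(u,v) = (DA(x)(A(x)u))·v − (DA(x)(A(x)v))·u + A(x)·((DA(x)v)·u) − A(x)·((DA(x)u)·v)`. -/
noncomputable def nijOp {E : Type*} [NormedAddCommGroup E] [NormedSpace ℝ E]
    (A : E → E → E) (x u v : E) : E :=
  fderiv ℝ (fun y => A y v) x (A x u) - fderiv ℝ (fun y => A y u) x (A x v)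
    + A x (fderiv ℝ (fun y => A y u) x v) - A x (fderiv ℝ (fun y => A y v) x u)

/-- Directional derivative of a matrix field on `ℝᵐ`, entrywise. -/
noncomputable def matDirDerivY {m : ℕ} (H : (Fin m → ℝ) → Matrix (Fin m) (Fin m) ℝ)
    (y w : Fin m → ℝ) : Matrix (Fin m) (Fin m) ℝ :=
  Matrix.of fun i j => fderiv ℝ (fun y' => H y' i j) y w

/-- The tensor field `G″ = J + H + Σ_j X_j ⊗ dx_j` acting on `ℝⁿ × ℝᵐ`. -/
noncomputable def Gact {n m : ℕ} (a : Fin n → ℝ)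
    (H : (Fin m → ℝ) → Matrix (Fin m) (Fin m) ℝ)
    (X : Fin n → (Fin n → ℝ) × (Fin m → ℝ) → (Fin m → ℝ))
    (p : (Fin n → ℝ) × (Fin m → ℝ)) (w : (Fin n → ℝ) × (Fin m → ℝ)) :
    (Fin n → ℝ) × (Fin m → ℝ) :=
  (fun j => a j * w.1 j, (H p.2).mulVec w.2 + ∑ j, w.1 j • X j p)

/-!
Test the vanishing torsion on `u = ∂/∂x_j` and `v ∈ ℝᵐ ⊆ ℝⁿ × ℝᵐ`. Since `G″` has constant
`x`-block, its derivatives only affect the `ℝᵐ` component, where `DG″(w)·u = D X_j(w)`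
and `DG″(w)·v = (DH(w_y))·v`, which vanishes for `w = u`. As `G″u = (a_j e_j, X_j)` and `G″v = (0, Hv)`, the `ℝᵐ` component
of `N(u, v)` is exactly `(DH(X_j))v − D_yX_j(Hv) + H(D_yX_j v)`.
-/

section PartialDeriv

variable {𝕜 E F G : Type*} [NontriviallyNormedField 𝕜]
  [NormedAddCommGroup E] [NormedSpace 𝕜 E] [NormedAddCommGroup F] [NormedSpace 𝕜 F]
  [NormedAddCommGroup G] [NormedSpace 𝕜 G]

theorem fderiv_comp_prodMk_right_apply {f : E × F → G} {p : E × F}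
    (hf : DifferentiableAt 𝕜 f p) (w : F) :
    fderiv 𝕜 (fun y => f (p.1, y)) p.2 w = fderiv 𝕜 f p (0, w) := by
  have h : HasFDerivAt (fun y => f (p.1, y))
      ((fderiv 𝕜 f p).comp (ContinuousLinearMap.inr 𝕜 E F)) p.2 :=
    hf.hasFDerivAt.comp p.2 (hasFDerivAt_prodMk_right p.1 p.2)
  rw [h.fderiv]
  rfl

end PartialDeriv

section MatrixField

variable {m : ℕ} {H : (Fin m → ℝ) → Matrix (Fin m) (Fin m) ℝ} {y : Fin m → ℝ}

theorem hasFDerivAt_mulVec (hH : ∀ i l, DifferentiableAt ℝ (fun y => H y i l) y)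
    (w : Fin m → ℝ) :
    HasFDerivAt (fun y => H y *ᵥ w)
      (ContinuousLinearMap.pi fun i => ∑ l, w l • fderiv ℝ (fun y => H y i l) y) y := by
  have h : (fun y => H y *ᵥ w) = fun y i => ∑ l, H y i l * w l := by
    funext y i
    simp [mulVec, dotProduct]
  rw [h]
  exact hasFDerivAt_pi.2 fun i =>
    HasFDerivAt.fun_sum fun l _ => (hH i l).hasFDerivAt.mul_const (w l)

theorem matDirDerivY_zero : matDirDerivY H y 0 = 0 := by
  ext
  simp [matDirDerivY]

theorem fderiv_mulVec_apply (hH : ∀ i l, DifferentiableAt ℝ (fun y => H y i l) y)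
    (w z : Fin m → ℝ) :
    fderiv ℝ (fun y => H y *ᵥ w) y z = matDirDerivY H y z *ᵥ w := by
  rw [(hasFDerivAt_mulVec hH w).fderiv]
  ext i
  simp [matDirDerivY, mulVec, dotProduct, mul_comm]

end MatrixField

section Gact

variable {n m : ℕ} {a : Fin n → ℝ} {H : (Fin m → ℝ) → Matrix (Fin m) (Fin m) ℝ}
  {X : Fin n → (Fin n → ℝ) × (Fin m → ℝ) → (Fin m → ℝ)} {p : (Fin n → ℝ) × (Fin m → ℝ)}

theorem fderiv_Gact_apply (hH : ∀ i l, DifferentiableAt ℝ (fun y => H y i l) p.2)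
    (hX : ∀ k, DifferentiableAt ℝ (X k) p) (w z : (Fin n → ℝ) × (Fin m → ℝ)) :
    fderiv ℝ (fun q => Gact a H X q w) p z
      = (0, matDirDerivY H p.2 z.2 *ᵥ w.2 + ∑ k, w.1 k • fderiv ℝ (X k) p z) := by
  have hHw := (hasFDerivAt_mulVec hH w.2).differentiableAt.hasFDerivAt.comp p hasFDerivAt_snd
  have hXw := HasFDerivAt.fun_sum (u := Finset.univ) fun k _ =>
    (hX k).hasFDerivAt.const_smul (w.1 k)
  have hG : HasFDerivAt (fun q => Gact a H X q w) _ p :=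
    (hasFDerivAt_const (fun j => a j * w.1 j) p).prodMk (hHw.add hXw)
  rw [hG.fderiv]
  simp [fderiv_mulVec_apply hH]

theorem Gact_mk_zero_left (v : Fin m → ℝ) : Gact a H X p (0, v) = (0, H p.2 *ᵥ v) := by
  ext <;> simp [Gact]

theorem snd_nijOp_Gact_single (hH : ∀ i l, DifferentiableAt ℝ (fun y => H y i l) p.2)
    (hX : ∀ k, DifferentiableAt ℝ (X k) p) (j : Fin n) (v : Fin m → ℝ) :
    (nijOp (Gact a H X) p (Pi.single j 1, 0) (0, v)).2
      = matDirDerivY H p.2 (X j p) *ᵥ v - fderiv ℝ (X j) p (0, H p.2 *ᵥ v)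
        + H p.2 *ᵥ fderiv ℝ (X j) p (0, v) := by
  simp only [nijOp, fderiv_Gact_apply hH hX]
  rw [Gact_mk_zero_left]
  simp [matDirDerivY_zero, Gact, Pi.single_apply]

end Gact

theorem lemma_8_2_general {n m : ℕ} (U : Set ((Fin n → ℝ) × (Fin m → ℝ))) (hU : IsOpen U)
    (a : Fin n → ℝ)
    (V : Set (Fin m → ℝ)) (hV : IsOpen V) (hUV : Prod.snd '' U ⊆ V)
    (H : (Fin m → ℝ) → Matrix (Fin m) (Fin m) ℝ)
    (hHs : ∀ i j, ContDiffOn ℝ (⊤ : ℕ∞) (fun y => H y i j) V)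
    (X : Fin n → (Fin n → ℝ) × (Fin m → ℝ) → (Fin m → ℝ))
    (hXs : ∀ j, ContDiffOn ℝ (⊤ : ℕ∞) (X j) U)
    (hnij : ∀ p ∈ U, ∀ u v : (Fin n → ℝ) × (Fin m → ℝ), nijOp (Gact a H X) p u v = 0) :
    ∀ j : Fin n, ∀ p ∈ U, ∀ v : Fin m → ℝ,
      (matDirDerivY H p.2 (X j p)).mulVec v
          - fderiv ℝ (fun y => X j (p.1, y)) p.2 ((H p.2).mulVec v)
          + (H p.2).mulVec (fderiv ℝ (fun y => X j (p.1, y)) p.2 v) = 0 := by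
  intro j p hp v
  have hX : ∀ k, DifferentiableAt ℝ (X k) p := fun k =>
    ((hXs k).differentiableOn (by simp)).differentiableAt (hU.mem_nhds hp)
  have hH : ∀ i l, DifferentiableAt ℝ (fun y => H y i l) p.2 := fun i l =>
    ((hHs i l).differentiableOn (by simp)).differentiableAt (hV.mem_nhds (hUV ⟨p, hp, rfl⟩))
  rw [fderiv_comp_prodMk_right_apply (hX j), fderiv_comp_prodMk_right_apply (hX j),
    ← snd_nijOp_Gact_single hH hX, hnij p hp]
  rfl

/-- Lemma 8.2 (local coordinate form): if the Nijenhuis torsion of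
`G″ = J + H + Σ_j X_j ⊗ dx_j` vanishes, then `L_{X_j} H = 0` along the fibers
`x = const`, i.e. `(DH(X_j))v − DX_j(Hv) + H(DX_j v) = 0`. -/
theorem lemma_8_2 {n m : ℕ} (U : Set ((Fin n → ℝ) × (Fin m → ℝ))) (hU : IsOpen U)
    (a : Fin n → ℝ) (ha : ∀ j, a j ≠ 0)
    (V : Set (Fin m → ℝ)) (hV : IsOpen V) (hUV : Prod.snd '' U ⊆ V)
    (H : (Fin m → ℝ) → Matrix (Fin m) (Fin m) ℝ)
    (hHs : ∀ i j, ContDiffOn ℝ (⊤ : ℕ∞) (fun y => H y i j) V)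
    (X : Fin n → (Fin n → ℝ) × (Fin m → ℝ) → (Fin m → ℝ))
    (hXs : ∀ j, ContDiffOn ℝ (⊤ : ℕ∞) (X j) U)
    (hnij : ∀ p ∈ U, ∀ u v : (Fin n → ℝ) × (Fin m → ℝ), nijOp (Gact a H X) p u v = 0) :
    ∀ j : Fin n, ∀ p ∈ U, ∀ v : Fin m → ℝ,
      (matDirDerivY H p.2 (X j p)).mulVec v
          - fderiv ℝ (fun y => X j (p.1, y)) p.2 ((H p.2).mulVec v)
          + (H p.2).mulVec (fderiv ℝ (fun y => X j (p.1, y)) p.2 v) = 0 :=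
  lemma_8_2_general U hU a V hV hUV H hHs X hXs hnij
end
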